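/- arXiv:2308.16162 — 2 statements merged into one kernel-verified Lean document; each statement's English description precedes it below -/
import Mathlib

section
/- Let α(t,ε) ∈ Ω₀(M;p,p') be a variation with fixed endpoints of a reflected path, with reflection/kink time functions T_i(ε). Then the derivative of the action is d/dε J[α(·,ε)] = −∫₀ᵀ⟨D_tα̇ + ∇V(α), ∂α/∂ε(t,ε)⟩dt + Σ_{i=1}^{m}⟨−Δα̇(T_i(ε),ε), (∂α/∂ε)̄(T_i(ε),ε)⟩, where Δ and the bar denote the jump and average of one-sided limits at T_i(ε). -/
open Filter Set Function
open scoped RealInnerProductSpace Topology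

noncomputable section

/-- Right-sided limit of a function at a point. -/
def rlim {F : Type*} [TopologicalSpace F] [Nonempty F] (f : ℝ → F) (t : ℝ) : F :=
  limUnder (nhdsWithin t (Set.Ioi t)) f

/-- Left-sided limit of a function at a point. -/
def llim {F : Type*} [TopologicalSpace F] [Nonempty F] (f : ℝ → F) (t : ℝ) : F :=
  limUnder (nhdsWithin t (Set.Iio t)) f

/-- Geometric setting: the ambient space `E` (playing the role of `M`), a compact
embedded hypersurface `Y = {F = 0}` cut out by a smooth defining function with
nonvanishing gradient on `Y`, and a potential `V` which is `C¹` on `M` and smooth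
up to `Y` separately from each side. -/
structure Setting (E : Type*) [NormedAddCommGroup E] [InnerProductSpace ℝ E]
    [FiniteDimensional ℝ E] where
  F : E → ℝ
  V : E → ℝ
  smoothF : ContDiff ℝ (⊤ : ℕ∞) F
  nondeg : ∀ x : E, F x = 0 → gradient F x ≠ 0
  compactY : IsCompact {x : E | F x = 0}
  V_C1 : ContDiff ℝ 1 V
  V_smooth_plus : ContDiffOn ℝ (⊤ : ℕ∞) V {x : E | 0 ≤ F x}
  V_smooth_minus : ContDiffOn ℝ (⊤ : ℕ∞) V {x : E | F x ≤ 0}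

namespace Setting

variable {E : Type*} [NormedAddCommGroup E] [InnerProductSpace ℝ E]
  [FiniteDimensional ℝ E] (S : Setting E)

/-- The hypersurface `Y`. -/
def Y : Set E := {x : E | S.F x = 0}

/-- Unit normal field to `Y`. -/
def N (x : E) : E := ‖gradient S.F x‖⁻¹ • gradient S.F x

/-- Normal component (as a vector) of `v` relative to `Y` at the point `y`. -/
def perp (y v : E) : E := ⟪v, S.N y⟫ • S.N y

/-- Tangential component of `v` relative to `Y` at the point `y`. -/
def tang (y v : E) : E := v - S.perp y v

/-- Normal component (as a scalar) of `v` relative to `Y` at the point `y`. -/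
def nc (y v : E) : ℝ := ⟪v, S.N y⟫

/-- Shape operator of `Y` at `y`. -/
def shape (y X : E) : E := -(fderiv ℝ S.N y X)

/-- Scalar second fundamental form of `Y` at `y`. -/
def IIs (y X W : E) : ℝ := ⟪S.shape y X, W⟫

/-- Vector-valued second fundamental form of `Y` at `y`. -/
def IIvec (y X W : E) : E := S.IIs y X W • S.N y

/-- Gradient of the potential. -/
def gradV (x : E) : E := gradient S.V x

/-- Hessian of the potential applied to a vector. -/
def hessV (x w : E) : E := fderiv ℝ (gradient S.V) x w

end Setting

/-- The data of a broken path: total time `T`, break times `Tt 0 < … < Tt (m-1)`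
in `(0,T)`, a flag `isR i` recording whether the `i`-th break time is a
reflection time (`true`) or a kink time (`false`), and the path `α` itself. -/
structure PathData (E : Type*) where
  T : ℝ
  m : ℕ
  Tt : Fin m → ℝ
  isR : Fin m → Bool
  α : ℝ → E

/-- `f` is smooth on every subinterval of `[0,T]` avoiding the break times `B`,
with all derivatives extending continuously to the closed subinterval (phrased
via a globally smooth extension). -/
def SmoothAway {F : Type*} [NormedAddCommGroup F] [NormedSpace ℝ F]
    (T : ℝ) {m : ℕ} (B : Fin m → ℝ) (f : ℝ → F) : Prop :=
  ∀ a b : ℝ, 0 ≤ a → b ≤ T → a < b → (∀ j, B j ∉ Set.Ioo a b) →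
    ∃ g : ℝ → F, ContDiff ℝ (⊤ : ℕ∞) g ∧ Set.EqOn f g (Set.Ioo a b)

variable {E : Type*} [NormedAddCommGroup E] [InnerProductSpace ℝ E]
  [FiniteDimensional ℝ E]

/-- `P` is a reflected path for the setting `S` (Definition 2.1). -/
structure IsReflectedPath (S : Setting E) (P : PathData E) : Prop where
  T_pos : 0 < P.T
  mono : StrictMono P.Tt
  mem : ∀ i, P.Tt i ∈ Set.Ioo 0 P.T
  cont : ContinuousOn P.α (Set.Icc 0 P.T)
  smooth : SmoothAway P.T P.Tt P.α
  refl_mem : ∀ i, P.isR i = true → P.α (P.Tt i) ∈ S.Y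
  one_side : ∀ i, P.isR i = true → ∃ ε > 0,
      ∀ s ∈ Set.Ioo (P.Tt i - ε) (P.Tt i + ε),
      ∀ s' ∈ Set.Ioo (P.Tt i - ε) (P.Tt i + ε),
        s ≠ P.Tt i → s' ≠ P.Tt i → 0 < S.F (P.α s) * S.F (P.α s')
  transversal : ∀ i, P.isR i = true →
      S.nc (P.α (P.Tt i)) (llim (deriv P.α) (P.Tt i)) ≠ 0 ∧
      S.nc (P.α (P.Tt i)) (rlim (deriv P.α) (P.Tt i)) ≠ 0

/-- The conditions turning a reflected path into a reflected *physical* path: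
the Euler–Lagrange (Newton) equation away from break times, the reflection law
at reflection times and continuity of the velocity at kink times
(Definition 2.4). -/
structure PhysicalConditions (S : Setting E) (P : PathData E) : Prop where
  ode : ∀ t ∈ Set.Ioo 0 P.T, (∀ i, t ≠ P.Tt i) →
      deriv (deriv P.α) t + S.gradV (P.α t) = 0
  refl_perp : ∀ i, P.isR i = true →
      S.perp (P.α (P.Tt i)) (rlim (deriv P.α) (P.Tt i)) +
        S.perp (P.α (P.Tt i)) (llim (deriv P.α) (P.Tt i)) = 0
  refl_tang : ∀ i, P.isR i = true →
      S.tang (P.α (P.Tt i)) (rlim (deriv P.α) (P.Tt i)) =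
        S.tang (P.α (P.Tt i)) (llim (deriv P.α) (P.Tt i))
  kink : ∀ i, P.isR i = false →
      rlim (deriv P.α) (P.Tt i) = llim (deriv P.α) (P.Tt i)

/-- A reflected physical path. -/
def IsPhysicalPath (S : Setting E) (P : PathData E) : Prop :=
  IsReflectedPath S P ∧ PhysicalConditions S P

/-- A periodic reflected physical path. -/
def IsPeriodicPhysicalPath (S : Setting E) (P : PathData E) : Prop :=
  IsPhysicalPath S P ∧ P.α 0 = P.α P.T ∧
    rlim (deriv P.α) 0 = llim (deriv P.α) P.T

/-- The family of break time functions extended by the constants `0` and `T`. -/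
def extT (T : ℝ) {m : ℕ} (τ : Fin m → ℝ → ℝ) : Fin (m + 2) → ℝ → ℝ :=
  fun i ε =>
    if h : (i : ℕ) = 0 then 0
    else if h' : (i : ℕ) ≤ m then τ ⟨(i : ℕ) - 1, by omega⟩ ε else T

/-- A (one-parameter) variation of the reflected path `P` through reflected
paths, with break time functions `τ i` (Definition 2.2). -/
structure IsVariation (S : Setting E) (P : PathData E) (ε₀ : ℝ)
    (A : ℝ → ℝ → E) (τ : Fin P.m → ℝ → ℝ) : Prop where
  eps_pos : 0 < ε₀
  base : ∀ t, A 0 t = P.α t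
  τ_base : ∀ i, τ i 0 = P.Tt i
  τ_smooth : ∀ i, ContDiffOn ℝ (⊤ : ℕ∞) (τ i) (Set.Ioo (-ε₀) ε₀)
  paths : ∀ ε ∈ Set.Ioo (-ε₀) ε₀,
      IsReflectedPath S ⟨P.T, P.m, fun i => τ i ε, P.isR, A ε⟩
  smooth2 : ∀ i : Fin (P.m + 1),
      ∃ g : ℝ × ℝ → E, ContDiff ℝ (⊤ : ℕ∞) g ∧
        Set.EqOn (fun p : ℝ × ℝ => A p.1 p.2) g
          {p : ℝ × ℝ | p.1 ∈ Set.Ioo (-ε₀) ε₀ ∧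
            p.2 ∈ Set.Ioo (extT P.T τ i.castSucc p.1) (extT P.T τ i.succ p.1)}

/-- Two-parameter analogue of `extT`. -/
def extT2 (T : ℝ) {m : ℕ} (τ : Fin m → ℝ → ℝ → ℝ) : Fin (m + 2) → ℝ → ℝ → ℝ :=
  fun i ε δ =>
    if h : (i : ℕ) = 0 then 0
    else if h' : (i : ℕ) ≤ m then τ ⟨(i : ℕ) - 1, by omega⟩ ε δ else T

/-- A two-parameter variation of the reflected path `P` through reflected
paths, with break time functions `τ i`. -/
structure IsVariation2 (S : Setting E) (P : PathData E) (ε₀ : ℝ)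
    (A : ℝ → ℝ → ℝ → E) (τ : Fin P.m → ℝ → ℝ → ℝ) : Prop where
  eps_pos : 0 < ε₀
  base : ∀ t, A 0 0 t = P.α t
  τ_base : ∀ i, τ i 0 0 = P.Tt i
  τ_smooth : ∀ i, ContDiffOn ℝ (⊤ : ℕ∞) (fun p : ℝ × ℝ => τ i p.1 p.2)
      (Set.Ioo (-ε₀) ε₀ ×ˢ Set.Ioo (-ε₀) ε₀)
  paths : ∀ ε ∈ Set.Ioo (-ε₀) ε₀, ∀ δ ∈ Set.Ioo (-ε₀) ε₀,
      IsReflectedPath S ⟨P.T, P.m, fun i => τ i ε δ, P.isR, A ε δ⟩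
  smooth2 : ∀ i : Fin (P.m + 1),
      ∃ g : ℝ × ℝ × ℝ → E, ContDiff ℝ (⊤ : ℕ∞) g ∧
        Set.EqOn (fun p : ℝ × ℝ × ℝ => A p.1 p.2.1 p.2.2) g
          {p : ℝ × ℝ × ℝ | p.1 ∈ Set.Ioo (-ε₀) ε₀ ∧ p.2.1 ∈ Set.Ioo (-ε₀) ε₀ ∧
            p.2.2 ∈ Set.Ioo (extT2 P.T τ i.castSucc p.1 p.2.1)
              (extT2 P.T τ i.succ p.1 p.2.1)}

/-- `Z` arises as the variation vector field `∂α/∂ε|₀` of some variation of `P`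
through reflected paths. -/
def IsVariationVF (S : Setting E) (P : PathData E) (Z : ℝ → E) : Prop :=
  ∃ (ε₀ : ℝ) (A : ℝ → ℝ → E) (τ : Fin P.m → ℝ → ℝ),
    IsVariation S P ε₀ A τ ∧
    ∀ t ∈ Set.Icc 0 P.T, (∀ i, t ≠ P.Tt i) →
      HasDerivAt (fun ε => A ε t) (Z t) 0

/-- The action functional `J[γ] = ∫₀ᵀ (½|γ̇|² − V(γ)) dt`. -/
def action (S : Setting E) (T : ℝ) (γ : ℝ → E) : ℝ :=
  ∫ t in (0:ℝ)..T, ((2⁻¹ : ℝ) * ‖deriv γ t‖ ^ 2 - S.V (γ t))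

/-- Admissible variation vector fields along a reflected physical path: `Z` is
piecewise smooth with breaks at some finite set containing the break times of
`P`, the jump of `Z` at reflection times is normal and its average tangential,
and `Z` is continuous at all other break points. -/
def IsAdmissibleVF (S : Setting E) (P : PathData E) (Z : ℝ → E) : Prop :=
  ∃ (k : ℕ) (B : Fin k → ℝ), StrictMono B ∧ (∀ j, B j ∈ Set.Ioo 0 P.T) ∧
    (∀ i : Fin P.m, ∃ j, B j = P.Tt i) ∧
    SmoothAway P.T B Z ∧
    (∀ i : Fin P.m, P.isR i = true →
      S.tang (P.α (P.Tt i)) (rlim Z (P.Tt i)) =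
        S.tang (P.α (P.Tt i)) (llim Z (P.Tt i)) ∧
      S.perp (P.α (P.Tt i)) (rlim Z (P.Tt i)) +
        S.perp (P.α (P.Tt i)) (llim Z (P.Tt i)) = 0) ∧
    (∀ j, (∀ i : Fin P.m, P.isR i = true → B j ≠ P.Tt i) →
      rlim Z (B j) = llim Z (B j) ∧ Z (B j) = llim Z (B j))

/-- The tangent space `T_αΩ₀(M;p,p')`: admissible variation vector fields
vanishing at both endpoints. -/
def omega0VF (S : Setting E) (P : PathData E) : Set (ℝ → E) :=
  {Z | IsAdmissibleVF S P Z ∧ rlim Z 0 = 0 ∧ llim Z P.T = 0}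

/-- The tangent space `T_αΩ_per(M)`: admissible variation vector fields with
`Z(0) = Z(T)`. -/
def omegaPerVF (S : Setting E) (P : PathData E) : Set (ℝ → E) :=
  {Z | IsAdmissibleVF S P Z ∧ rlim Z 0 = llim Z P.T}

/-- The second variation form `J''` of the action at the reflected physical
path `P` (fixed endpoints); cf. Theorem 4.1.  In the flat ambient space the
curvature term `R(α̇,W)α̇` vanishes identically. -/
def secondVariation (S : Setting E) (P : PathData E) (W Z : ℝ → E) : ℝ :=
  -(∫ t in (0:ℝ)..P.T, ⟪deriv (deriv W) t + S.hessV (P.α t) (W t), Z t⟫) +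
  ∑ i : Fin P.m,
    (let y := P.α (P.Tt i)
     let Wdp := rlim (deriv W) (P.Tt i)
     let Wdm := llim (deriv W) (P.Tt i)
     let Zp := rlim Z (P.Tt i)
     let Zm := llim Z (P.Tt i)
     let vm := llim (deriv P.α) (P.Tt i)
     let Wm := llim W (P.Tt i)
     let Zb := (2⁻¹ : ℝ) • (Zp + Zm)
     let Wdb := (2⁻¹ : ℝ) • (Wdp + Wdm)
     let dc := (-(S.nc y Wm / S.nc y vm)) • S.tang y vm + S.tang y Wm
     if P.isR i then
       -⟪Wdp - Wdm, Zb⟫ + 2 * ⟪Wdb, S.perp y Zm⟫ +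
         ⟪(2:ℝ) • S.perp y Wm, (S.nc y Zm / S.nc y vm) • S.gradV y⟫ +
         2 * S.nc y vm * ⟪S.shape y dc, Zb⟫ -
         2 * S.IIs y dc (S.tang y vm) * S.nc y Zm
     else -⟪Wdp - Wdm, Zb⟫)

/-- The second variation form for the periodic problem: `J''` with the extra
boundary (kink) term at `t = 0 ∼ T`. -/
def secondVariationPer (S : Setting E) (P : PathData E) (W Z : ℝ → E) : ℝ :=
  secondVariation S P W Z -
    ⟪rlim (deriv W) 0 - llim (deriv W) P.T,
      (2⁻¹ : ℝ) • (rlim Z 0 + llim Z P.T)⟫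

/-- `W` is a reflected Jacobi field along `P` on the time interval `(a,b)`:
it satisfies the Jacobi equation away from break times, the admissibility jumps
and the reflection conditions (involving the shape operator and second
fundamental form) at reflection times, and is `C¹` at kink times
(Definition 4.3). -/
def IsJacobiFieldOn (S : Setting E) (P : PathData E) (a b : ℝ) (W : ℝ → E) :
    Prop :=
  (∀ a' b' : ℝ, a ≤ a' → b' ≤ b → a' < b' → (∀ i, P.Tt i ∉ Set.Ioo a' b') →
    ∃ g : ℝ → E, ContDiff ℝ (⊤ : ℕ∞) g ∧ Set.EqOn W g (Set.Ioo a' b')) ∧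
  (∀ t ∈ Set.Ioo a b, (∀ i, t ≠ P.Tt i) →
    deriv (deriv W) t + S.hessV (P.α t) (W t) = 0) ∧
  (∀ i, P.Tt i ∈ Set.Ioo a b → P.isR i = true →
    (let y := P.α (P.Tt i)
     let vm := llim (deriv P.α) (P.Tt i)
     let Wm := llim W (P.Tt i)
     let dc := (-(S.nc y Wm / S.nc y vm)) • S.tang y vm + S.tang y Wm
     S.tang y (rlim W (P.Tt i)) = S.tang y Wm ∧
     S.perp y (rlim W (P.Tt i)) + S.perp y Wm = 0 ∧
     S.tang y (rlim (deriv W) (P.Tt i)) - S.tang y (llim (deriv W) (P.Tt i)) =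
       (2 * S.nc y vm) • S.shape y dc ∧
     (2⁻¹ : ℝ) • (S.perp y (rlim (deriv W) (P.Tt i)) +
         S.perp y (llim (deriv W) (P.Tt i))) =
       (-(S.nc y Wm / S.nc y vm)) • S.perp y (S.gradV y) +
         S.IIvec y dc (S.tang y vm))) ∧
  (∀ i, P.Tt i ∈ Set.Ioo a b → P.isR i = false →
    rlim W (P.Tt i) = llim W (P.Tt i) ∧ W (P.Tt i) = llim W (P.Tt i) ∧
    rlim (deriv W) (P.Tt i) = llim (deriv W) (P.Tt i))

/-- `W` is a reflected Jacobi field along all of `P`. -/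
def IsJacobiField (S : Setting E) (P : PathData E) (W : ℝ → E) : Prop :=
  IsJacobiFieldOn S P 0 P.T W

/-- The space `J_{C⁰}(α)` of reflected Jacobi fields along `α|_{(0,T)}` with
`W(0) = W(T)`. -/
def jacobiC0 (S : Setting E) (P : PathData E) : Set (ℝ → E) :=
  {W | IsJacobiField S P W ∧ rlim W 0 = llim W P.T}

/-- The times `a < b` are conjugate along `P`: some nonzero reflected Jacobi
field on `(a,b)` vanishes at both ends. -/
def IsConjugate (S : Setting E) (P : PathData E) (a b : ℝ) : Prop :=
  ∃ W : ℝ → E, IsJacobiFieldOn S P a b W ∧ rlim W a = 0 ∧ llim W b = 0 ∧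
    ∃ t ∈ Set.Ioo a b, W t ≠ 0

/-- The space of reflected Jacobi fields on `(a,b)` vanishing at both ends. -/
def ConjugateSpace (S : Setting E) (P : PathData E) (a b : ℝ) : Set (ℝ → E) :=
  {W | IsJacobiFieldOn S P a b W ∧ rlim W a = 0 ∧ llim W b = 0}

/-- The multiplicity of `a`, `b` as conjugate times along `P` is `k`. -/
def ConjugateMult (S : Setting E) (P : PathData E) (a b : ℝ) (k : ℕ) : Prop :=
  ∃ Wsp : Submodule ℝ (ℝ → E), ↑Wsp = ConjugateSpace S P a b ∧
    Module.rank ℝ ↥Wsp = (k : Cardinal)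

/-- The symmetric bilinear form `Q` restricted to the (conical) set `C` has
index `k`: there is a `k`-dimensional subspace contained in `C` on which `Q` is
negative definite, and no subspace of bigger dimension with this property. -/
def HasIndex {F : Type*} [AddCommGroup F] [Module ℝ F]
    (Q : F → F → ℝ) (C : Set F) (k : ℕ) : Prop :=
  (∃ Wsp : Submodule ℝ F, ↑Wsp ⊆ C ∧ Module.rank ℝ ↥Wsp = (k : Cardinal) ∧
    ∀ z ∈ Wsp, z ≠ 0 → Q z z < 0) ∧
  (∀ Wsp : Submodule ℝ F, ↑Wsp ⊆ C → (∀ z ∈ Wsp, z ≠ 0 → Q z z < 0) →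
    Module.rank ℝ ↥Wsp ≤ (k : Cardinal))



/-! ### Auxiliary machinery for the proof of the first variation formula -/

section FVAux

open MeasureTheory

lemma FV_top_add_one_le : ((⊤:ℕ∞) : WithTop ℕ∞) + 1 ≤ ((⊤:ℕ∞) : WithTop ℕ∞) := by simp

lemma FV_one_le_top : (1 : WithTop ℕ∞) ≤ ((⊤:ℕ∞) : WithTop ℕ∞) := by exact_mod_cast le_top

variable {F : Type*} [NormedAddCommGroup F] [NormedSpace ℝ F]

lemma FV_llim_eqOn {f h : ℝ → F} {a b : ℝ} (hab : a < b) (hh : Continuous h)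
    (hfg : Set.EqOn f h (Set.Ioo a b)) : llim f b = h b := by
  apply Filter.Tendsto.limUnder_eq
  have hmem : Set.Ioo a b ∈ 𝓝[<] b := Ioo_mem_nhdsLT_of_mem ⟨hab, le_refl b⟩
  have : f =ᶠ[𝓝[<] b] h := Filter.eventuallyEq_of_mem hmem hfg
  exact Filter.Tendsto.congr' this.symm ((hh.tendsto b).mono_left nhdsWithin_le_nhds)

lemma FV_rlim_eqOn {f h : ℝ → F} {a b : ℝ} (hab : a < b) (hh : Continuous h)
    (hfg : Set.EqOn f h (Set.Ioo a b)) : rlim f a = h a := by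
  apply Filter.Tendsto.limUnder_eq
  have hmem : Set.Ioo a b ∈ 𝓝[>] a := Ioo_mem_nhdsGT_of_mem ⟨le_refl a, hab⟩
  have : f =ᶠ[𝓝[>] a] h := Filter.eventuallyEq_of_mem hmem hfg
  exact Filter.Tendsto.congr' this.symm ((hh.tendsto a).mono_left nhdsWithin_le_nhds)

lemma FV_val_left {f h : ℝ → F} {a b lo hi : ℝ} (hab : a < b)
    (hf : ContinuousOn f (Set.Icc lo hi)) (hh : Continuous h)
    (hsub : Set.Ioo a b ⊆ Set.Icc lo hi) (hbmem : b ∈ Set.Icc lo hi)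
    (heq : Set.EqOn f h (Set.Ioo a b)) : h b = f b := by
  haveI : (𝓝[Set.Ioo a b] b).NeBot := by
    rw [← mem_closure_iff_nhdsWithin_neBot, closure_Ioo hab.ne]
    exact ⟨hab.le, le_rfl⟩
  have h1 : Filter.Tendsto f (𝓝[Set.Ioo a b] b) (𝓝 (f b)) :=
    (hf.continuousWithinAt hbmem).mono_left (nhdsWithin_mono _ hsub)
  have h2 : Filter.Tendsto h (𝓝[Set.Ioo a b] b) (𝓝 (h b)) :=
    (hh.tendsto b).mono_left nhdsWithin_le_nhds
  have heq' : h =ᶠ[𝓝[Set.Ioo a b] b] f :=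
    Filter.eventuallyEq_of_mem self_mem_nhdsWithin fun x hx => (heq hx).symm
  exact tendsto_nhds_unique (h2.congr' heq') h1

lemma FV_val_right {f h : ℝ → F} {a b lo hi : ℝ} (hab : a < b)
    (hf : ContinuousOn f (Set.Icc lo hi)) (hh : Continuous h)
    (hsub : Set.Ioo a b ⊆ Set.Icc lo hi) (hamem : a ∈ Set.Icc lo hi)
    (heq : Set.EqOn f h (Set.Ioo a b)) : h a = f a := by
  haveI : (𝓝[Set.Ioo a b] a).NeBot := by
    rw [← mem_closure_iff_nhdsWithin_neBot, closure_Ioo hab.ne]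
    exact ⟨le_rfl, hab.le⟩
  have h1 : Filter.Tendsto f (𝓝[Set.Ioo a b] a) (𝓝 (f a)) :=
    (hf.continuousWithinAt hamem).mono_left (nhdsWithin_mono _ hsub)
  have h2 : Filter.Tendsto h (𝓝[Set.Ioo a b] a) (𝓝 (h a)) :=
    (hh.tendsto a).mono_left nhdsWithin_le_nhds
  have heq' : h =ᶠ[𝓝[Set.Ioo a b] a] f :=
    Filter.eventuallyEq_of_mem self_mem_nhdsWithin fun x hx => (heq hx).symm
  exact tendsto_nhds_unique (h2.congr' heq') h1

/-- Derivative of `e ↦ ∫ t in (b ε)..(b e), L e t`. -/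
lemma FV_hasDerivAt_integral_moving {L : ℝ → ℝ → ℝ} (hc : Continuous ↿L)
    {b : ℝ → ℝ} {b' ε : ℝ} (hb : HasDerivAt b b' ε) :
    HasDerivAt (fun e => ∫ t in (b ε)..(b e), L e t) (L ε (b ε) * b') ε := by
  set c := b ε with hc'
  have hdecomp : ∀ e, (∫ t in c..(b e), L e t) =
      (∫ t in c..(b e), (L e t - L ε c)) + (b e - c) * L ε c := by
    intro e
    have h1 : IntervalIntegrable (fun t => L e t) MeasureTheory.volume c (b e) :=
      (hc.comp (continuous_const.prodMk continuous_id)).intervalIntegrable _ _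
    have h2 : IntervalIntegrable (fun _ : ℝ => L ε c) MeasureTheory.volume c (b e) :=
      intervalIntegrable_const
    rw [intervalIntegral.integral_sub h1 h2, intervalIntegral.integral_const]
    simp [smul_eq_mul]
  have key : HasDerivAt (fun e => ∫ t in c..(b e), (L e t - L ε c)) 0 ε := by
    rw [hasDerivAt_iff_isLittleO]
    simp only [← hc', intervalIntegral.integral_same, sub_zero, smul_zero]
    rw [Asymptotics.isLittleO_iff]
    intro η hη
    set M := |b'| + 1 with hM
    have hMpos : (0:ℝ) < M := by positivity
    have hη2 : (0:ℝ) < η / M := by positivity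
    have hcont : ContinuousAt ↿L (ε, c) := hc.continuousAt
    rw [Metric.continuousAt_iff] at hcont
    obtain ⟨δ, hδ, hδ'⟩ := hcont (η / M) hη2
    have hev1 : ∀ᶠ e in 𝓝 ε, |b e - c| ≤ M * |e - ε| := by
      have := (hasDerivAt_iff_isLittleO.mp hb).def (by norm_num : (0:ℝ) < 1)
      filter_upwards [this] with e he
      have h1 : |b e - c - (e - ε) * b'| ≤ |e - ε| := by
        simpa [Real.norm_eq_abs, smul_eq_mul] using he
      calc |b e - c| = |(b e - c - (e - ε) * b') + (e - ε) * b'| := by ring_nf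
        _ ≤ |b e - c - (e - ε) * b'| + |(e - ε) * b'| := abs_add_le _ _
        _ ≤ |e - ε| + |e - ε| * |b'| := by rw [abs_mul]; gcongr
        _ = (|b'| + 1) * |e - ε| := by ring
        _ = M * |e - ε| := by rw [hM]
    have hev2 : ∀ᶠ e in 𝓝 ε, |b e - c| < δ := by
      have h := Metric.tendsto_nhds.mp hb.continuousAt.tendsto δ hδ
      filter_upwards [h] with e he
      simpa [Real.dist_eq] using he
    have hev3 : ∀ᶠ e in 𝓝 ε, |e - ε| < δ := by
      have h := Metric.tendsto_nhds.mp (tendsto_id : Filter.Tendsto (fun e : ℝ => e) (𝓝 ε) (𝓝 ε)) δ hδ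
      filter_upwards [h] with e he
      simpa [Real.dist_eq] using he
    filter_upwards [hev1, hev2, hev3] with e h1 h2 h3
    have hbound : ∀ t ∈ Set.uIoc c (b e), ‖L e t - L ε c‖ ≤ η / M := by
      intro t ht
      have ht' : |t - c| ≤ |b e - c| := by
        rcases Set.mem_uIoc.mp ht with h | h
        · rw [abs_of_nonneg (by linarith [h.1] : (0:ℝ) ≤ t - c)]
          have : t - c ≤ b e - c := by linarith [h.2]
          exact this.trans (le_abs_self _)
        · rw [abs_of_nonpos (by linarith [h.2] : t - c ≤ 0)]
          have h5 : -(t - c) ≤ -(b e - c) := by linarith [h.1]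
          exact h5.trans (neg_le_abs _)
      have hdist : dist (e, t) (ε, c) < δ := by
        rw [Prod.dist_eq]
        exact max_lt (by simpa [Real.dist_eq] using h3)
          (by rw [Real.dist_eq]; exact lt_of_le_of_lt ht' h2)
      have := hδ' hdist
      rw [Real.dist_eq] at this
      rw [Real.norm_eq_abs]
      exact this.le
    calc ‖∫ t in c..(b e), (L e t - L ε c)‖ ≤ (η / M) * |b e - c| :=
          intervalIntegral.norm_integral_le_of_norm_le_const hbound
      _ ≤ (η / M) * (M * |e - ε|) := by gcongr
      _ = η * |e - ε| := by field_simp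
      _ = η * ‖e - ε‖ := by rw [Real.norm_eq_abs]
  have hlin : HasDerivAt (fun e => (b e - c) * L ε c) (b' * L ε c) ε :=
    (hb.sub_const c).mul_const _
  have hsum := key.add hlin
  simp only [zero_add] at hsum
  have heq : (fun e => ∫ t in c..(b e), L e t) =
      fun e => (∫ t in c..(b e), (L e t - L ε c)) + (b e - c) * L ε c :=
    funext hdecomp
  rw [heq, mul_comm]
  exact hsum

lemma FV_fderiv_apply_contDiff {g : ℝ × ℝ → F} (hg : ContDiff ℝ (⊤:ℕ∞) g) (u : ℝ × ℝ) :
    ContDiff ℝ (⊤:ℕ∞) (fun p => fderiv ℝ g p u) :=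
  (hg.fderiv_right FV_top_add_one_le).clm_apply contDiff_const

lemma FV_hasDerivAt_slice_t {g : ℝ × ℝ → F} (hg : ContDiff ℝ (⊤:ℕ∞) g) (e t : ℝ) :
    HasDerivAt (fun t' => g (e, t')) (fderiv ℝ g (e, t) (0, 1)) t := by
  have h := (hg.differentiable (by simp) (e, t)).hasFDerivAt
  have hφ : HasDerivAt (fun t' => ((e, t') : ℝ × ℝ)) ((0 : ℝ), (1 : ℝ)) t :=
    (hasDerivAt_const t e).prodMk (hasDerivAt_id t)
  exact h.comp_hasDerivAt t hφ

lemma FV_hasDerivAt_slice_e {g : ℝ × ℝ → F} (hg : ContDiff ℝ (⊤:ℕ∞) g) (e t : ℝ) :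
    HasDerivAt (fun e' => g (e', t)) (fderiv ℝ g (e, t) (1, 0)) e := by
  have h := (hg.differentiable (by simp) (e, t)).hasFDerivAt
  have hφ : HasDerivAt (fun e' => ((e', t) : ℝ × ℝ)) ((1 : ℝ), (0 : ℝ)) e :=
    (hasDerivAt_id e).prodMk (hasDerivAt_const e t)
  exact h.comp_hasDerivAt e hφ

lemma FV_hasDerivAt_comp_moving {g : ℝ × ℝ → F} (hg : ContDiff ℝ (⊤:ℕ∞) g)
    {s : ℝ → ℝ} {σ ε : ℝ} (hs : HasDerivAt s σ ε) :
    HasDerivAt (fun e => g (e, s e))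
      (fderiv ℝ g (ε, s ε) (1, 0) + σ • fderiv ℝ g (ε, s ε) (0, 1)) ε := by
  have h := (hg.differentiable (by simp) (ε, s ε)).hasFDerivAt
  have hφ : HasDerivAt (fun e => ((e, s e) : ℝ × ℝ)) ((1 : ℝ), σ) ε :=
    (hasDerivAt_id ε).prodMk hs
  have hco := h.comp_hasDerivAt ε hφ
  have hv : ((1 : ℝ), σ) = ((1 : ℝ), (0 : ℝ)) + σ • ((0 : ℝ), (1 : ℝ)) := by
    simp [Prod.ext_iff]
  rw [hv, map_add, _root_.map_smul] at hco
  exact hco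

lemma FV_mixed_symm {g : ℝ × ℝ → F} (hg : ContDiff ℝ (⊤:ℕ∞) g) (p u u' : ℝ × ℝ) :
    fderiv ℝ (fun q => fderiv ℝ g q u') p u = fderiv ℝ (fun q => fderiv ℝ g q u) p u' := by
  have hdg : ∀ q, HasFDerivAt g (fderiv ℝ g q) q := fun q =>
    (hg.differentiable (by simp) q).hasFDerivAt
  have hfd : Differentiable ℝ (fderiv ℝ g) :=
    (hg.fderiv_right FV_top_add_one_le).differentiable (by simp)
  have hd2 : HasFDerivAt (fderiv ℝ g) (fderiv ℝ (fderiv ℝ g) p) p := (hfd p).hasFDerivAt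
  have hsymm := second_derivative_symmetric hdg hd2 u u'
  have key : ∀ z : ℝ × ℝ, fderiv ℝ (fun q => fderiv ℝ g q z) p =
      (ContinuousLinearMap.apply ℝ F z).comp (fderiv ℝ (fderiv ℝ g) p) := fun z =>
    (((ContinuousLinearMap.apply ℝ F z).hasFDerivAt).comp p hd2).fderiv
  rw [key u', key u]
  simpa using hsymm

/-- Differentiation under the interval integral. -/
lemma FV_hasDerivAt_param {L L' : ℝ → ℝ → ℝ} (hL : Continuous ↿L) (hL' : Continuous ↿L')
    (hd : ∀ e t, HasDerivAt (fun x => L x t) (L' e t) e) (a b ε : ℝ) :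
    HasDerivAt (fun e => ∫ t in a..b, L e t) (∫ t in a..b, L' ε t) ε := by
  obtain ⟨C, hC⟩ := ((isCompact_closedBall ε 1).prod isCompact_uIcc).exists_bound_of_continuousOn
    (hL'.continuousOn : ContinuousOn ↿L' (Metric.closedBall ε 1 ×ˢ Set.uIcc a b))
  refine (intervalIntegral.hasDerivAt_integral_of_dominated_loc_of_deriv_le
    (F := L) (F' := L') (bound := fun _ => C) (Metric.ball_mem_nhds ε one_pos) ?_ ?_ ?_ ?_ ?_ ?_).2
  · exact Filter.Eventually.of_forall fun x =>
      ((hL.comp (continuous_const.prodMk continuous_id)).aestronglyMeasurable)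
  · exact (hL.comp (continuous_const.prodMk continuous_id)).intervalIntegrable _ _
  · exact ((hL'.comp (continuous_const.prodMk continuous_id)).aestronglyMeasurable)
  · refine MeasureTheory.ae_of_all _ fun t ht x hx => ?_
    exact hC (x, t) ⟨Metric.ball_subset_closedBall hx, Set.uIoc_subset_uIcc ht⟩
  · exact intervalIntegrable_const
  · exact MeasureTheory.ae_of_all _ fun t _ x _ => hd x t

lemma FV_piece {f L : ℝ → ℝ} {a b : ℝ} (hab : a ≤ b) (hL : Continuous L)
    (h : Set.EqOn f L (Set.Ioo a b)) :
    IntervalIntegrable f MeasureTheory.volume a b ∧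
      (∫ t in a..b, f t) = ∫ t in a..b, L t := by
  have hae : ∀ᵐ t ∂(MeasureTheory.volume : MeasureTheory.Measure ℝ), t ∈ Set.uIoc a b → f t = L t := by
    have hb : ∀ᵐ t : ℝ ∂MeasureTheory.volume, t ∉ ({b} : Set ℝ) :=
      MeasureTheory.measure_eq_zero_iff_ae_notMem.mp Real.volume_singleton
    filter_upwards [hb] with t htb ht
    have htIoo : t ∈ Set.Ioo a b := by
      rcases Set.mem_uIoc.mp ht with h1 | h1
      · exact ⟨h1.1, lt_of_le_of_ne h1.2 (by simpa using htb)⟩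
      · exact absurd (lt_of_le_of_lt (h1.2.trans hab) h1.1) (lt_irrefl t)
    exact h htIoo
  constructor
  · rw [intervalIntegrable_iff]
    have hLint : MeasureTheory.IntegrableOn L (Set.uIoc a b) MeasureTheory.volume := by
      rw [← intervalIntegrable_iff]; exact hL.intervalIntegrable a b
    exact hLint.congr_fun_ae ((MeasureTheory.ae_restrict_iff' measurableSet_uIoc).mpr
      (hae.mono fun t h1 h2 => (h1 h2).symm))
  · exact intervalIntegral.integral_congr_ae hae
end FVAux

section FVAux2
open scoped RealInnerProductSpace
variable {F : Type*} [NormedAddCommGroup F] [InnerProductSpace ℝ F]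

lemma FV_break (vm vp Zm Zp : F) (σ Vc : ℝ) (hjump : Zm + σ • vm = Zp + σ • vp) :
    (⟪vm, Zm⟫ + (2⁻¹ * ⟪vm, vm⟫ - Vc) * σ) - (⟪vp, Zp⟫ + (2⁻¹ * ⟪vp, vp⟫ - Vc) * σ)
      = ⟪-(vp - vm), (2⁻¹ : ℝ) • (Zp + Zm)⟫ := by
  have hZp : Zp = Zm + σ • vm - σ • vp := by rw [hjump]; abel
  rw [hZp]
  simp only [inner_neg_left, inner_sub_left, inner_add_left, inner_sub_right, inner_add_right,
    real_inner_smul_left, real_inner_smul_right, inner_neg_right]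
  rw [real_inner_comm vp vm, real_inner_comm Zm vm, real_inner_comm Zm vp]
  ring

lemma FV_gradV_cont [CompleteSpace F] {V : F → ℝ} (hV : ContDiff ℝ 1 V) :
    Continuous (fun x => gradient V x) := by
  have h1 : Continuous (fderiv ℝ V) := (hV.fderiv_right (m := 0) (by norm_num)).continuous
  exact (InnerProductSpace.toDual ℝ F).symm.continuous.comp h1

end FVAux2

/-- The extended family of break times, as a function of `ℕ`. -/
noncomputable def FVs (T : ℝ) {m : ℕ} (τ : Fin m → ℝ → ℝ) (k : ℕ) (e : ℝ) : ℝ :=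
  if h : k = 0 then 0 else if h' : k ≤ m then τ ⟨k - 1, by omega⟩ e else T

/-- **First variation of the action** (Lemma 3.1): for a fixed-endpoint
variation of a reflected path,
`dJ/dε = −∫₀ᵀ⟨D_tα̇ + ∇V(α), ∂α/∂ε⟩ dt + Σᵢ ⟨−Δα̇(Tᵢ(ε),ε), (∂α/∂ε)̄(Tᵢ(ε),ε)⟩`. -/
theorem first_variation_formula (S : Setting E) (P : PathData E)
    (hP : IsReflectedPath S P) (ε₀ : ℝ) (A : ℝ → ℝ → E)
    (τ : Fin P.m → ℝ → ℝ) (hV : IsVariation S P ε₀ A τ)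
    (hfix : ∀ ε ∈ Set.Ioo (-ε₀) ε₀, A ε 0 = P.α 0 ∧ A ε P.T = P.α P.T) :
    ∀ ε ∈ Set.Ioo (-ε₀) ε₀,
      HasDerivAt (fun e => action S P.T (A e))
        (-(∫ t in (0:ℝ)..P.T,
            ⟪deriv (deriv (A ε)) t + S.gradV (A ε t),
              deriv (fun e => A e t) ε⟫) +
          ∑ i : Fin P.m,
            ⟪-(rlim (deriv (A ε)) (τ i ε) - llim (deriv (A ε)) (τ i ε)),
              (2⁻¹ : ℝ) •
                (rlim (fun t => deriv (fun e => A e t) ε) (τ i ε) +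
                  llim (fun t => deriv (fun e => A e t) ε) (τ i ε))⟫) ε := by
  intro ε hε
  classical
  have hIoo : ε ∈ Set.Ioo (-ε₀) ε₀ := hε
  choose g hgsm hgeq using hV.smooth2
  set s : ℕ → ℝ → ℝ := FVs P.T τ with hs_def
  -- basic facts about the extended break times
  have hs0 : ∀ e : ℝ, s 0 e = 0 := fun e => by rw [hs_def]; unfold FVs; rw [dif_pos rfl]
  have hsT : ∀ e : ℝ, s (P.m + 1) e = P.T := fun e => by
    rw [hs_def]; unfold FVs; rw [dif_neg (by omega), dif_neg (by omega)]
  have hsval : ∀ (k : ℕ) (h1 : 1 ≤ k) (h2 : k ≤ P.m) (e : ℝ),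
      s k e = τ ⟨k - 1, by omega⟩ e := fun k h1 h2 e => by
    rw [hs_def]; unfold FVs; rw [dif_neg (by omega), dif_pos h2]
  have hsmid : ∀ (i : Fin P.m) (e : ℝ), s ((i : ℕ) + 1) e = τ i e := by
    intro i e
    rw [hsval ((i : ℕ) + 1) (by omega) i.isLt e]
    congr 1
  have hcast : ∀ (k : Fin (P.m + 1)) (e : ℝ), extT P.T τ k.castSucc e = s (k : ℕ) e := by
    intro k e; rw [hs_def]; rfl
  have hsucc : ∀ (k : Fin (P.m + 1)) (e : ℝ), extT P.T τ k.succ e = s ((k : ℕ) + 1) e := by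
    intro k e; rw [hs_def]; rfl
  have hRP : ∀ e ∈ Set.Ioo (-ε₀) ε₀,
      IsReflectedPath S ⟨P.T, P.m, fun i => τ i e, P.isR, A e⟩ := hV.paths
  have hTpos : (0 : ℝ) < P.T := (hRP ε hIoo).T_pos
  have hτmem : ∀ e ∈ Set.Ioo (-ε₀) ε₀, ∀ i : Fin P.m, τ i e ∈ Set.Ioo 0 P.T :=
    fun e he i => (hRP e he).mem i
  have hslt : ∀ e ∈ Set.Ioo (-ε₀) ε₀, ∀ k : ℕ, k ≤ P.m → s k e < s (k + 1) e := by
    intro e he k hk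
    rcases Nat.eq_zero_or_pos k with rfl | hk1
    · rw [hs0]
      rcases Nat.eq_zero_or_pos P.m with hm0 | hm1
      · rw [show (0 : ℕ) + 1 = P.m + 1 by omega, hsT]; exact hTpos
      · rw [show (0 : ℕ) + 1 = ((⟨0, hm1⟩ : Fin P.m) : ℕ) + 1 by simp, hsmid ⟨0, hm1⟩ e]
        exact (hτmem e he ⟨0, hm1⟩).1
    · rw [hsval k hk1 hk e]
      rcases Nat.lt_or_ge k P.m with hklt | hge
      · rw [show k + 1 = ((⟨k, hklt⟩ : Fin P.m) : ℕ) + 1 by simp, hsmid ⟨k, hklt⟩ e]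
        exact (hRP e he).mono (show (⟨k - 1, by omega⟩ : Fin P.m) < ⟨k, hklt⟩ by
          rw [Fin.mk_lt_mk]; omega)
      · have hkm : k = P.m := le_antisymm hk hge
        subst hkm
        rw [hsT]
        exact (hτmem e he _).2
  have hsmem : ∀ e ∈ Set.Ioo (-ε₀) ε₀, ∀ k : ℕ, k ≤ P.m + 1 → s k e ∈ Set.Icc 0 P.T := by
    intro e he k hk
    rcases Nat.eq_zero_or_pos k with rfl | h1
    · rw [hs0]; exact ⟨le_rfl, hTpos.le⟩
    rcases Nat.lt_or_ge k (P.m + 1) with h2 | h2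
    · have hk2 : k ≤ P.m := by omega
      rw [hsval k h1 hk2 e]
      exact ⟨(hτmem e he _).1.le, (hτmem e he _).2.le⟩
    · have hkm : k = P.m + 1 := by omega
      subst hkm
      rw [hsT]; exact ⟨hTpos.le, le_rfl⟩
  have hsd : ∀ k : ℕ, HasDerivAt (fun e => s k e) (deriv (fun e' => s k e') ε) ε := by
    intro k
    apply DifferentiableAt.hasDerivAt
    rcases Nat.eq_zero_or_pos k with rfl | h1
    · rw [show (fun e => s 0 e) = fun _ => (0 : ℝ) from funext hs0]
      exact differentiableAt_const _
    rcases Nat.lt_or_ge k (P.m + 1) with h2 | h2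
    · have hk2 : k ≤ P.m := by omega
      rw [show (fun e => s k e) = τ ⟨k - 1, by omega⟩ from funext fun e => hsval k h1 hk2 e]
      exact ((hV.τ_smooth _).contDiffAt (isOpen_Ioo.mem_nhds hIoo)).differentiableAt (by simp)
    · have hsk : ∀ e, s k e = P.T := fun e => by
        rw [hs_def]; unfold FVs; rw [dif_neg (by omega), dif_neg (by omega)]
      rw [show (fun e => s k e) = fun _ => P.T from funext hsk]
      exact differentiableAt_const _
  have hσ0 : deriv (fun e' => s 0 e') ε = 0 := by
    rw [show (fun e' => s 0 e') = fun _ => (0 : ℝ) from funext hs0]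
    exact deriv_const ε 0
  have hσT : deriv (fun e' => s (P.m + 1) e') ε = 0 := by
    rw [show (fun e' => s (P.m + 1) e') = fun _ => P.T from funext hsT]
    exact deriv_const ε _
  -- the fields attached to the local smooth extensions
  set v : Fin (P.m + 1) → ℝ × ℝ → E := fun k p => fderiv ℝ (g k) p (0, 1) with hv_def
  set w : Fin (P.m + 1) → ℝ × ℝ → E := fun k p => fderiv ℝ (g k) p (1, 0) with hw_def
  set vt : Fin (P.m + 1) → ℝ × ℝ → E := fun k p => fderiv ℝ (v k) p (0, 1) with hvt_def
  set ve : Fin (P.m + 1) → ℝ × ℝ → E := fun k p => fderiv ℝ (v k) p (1, 0) with hve_def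
  set ρ : Fin (P.m + 1) → ℝ × ℝ → ℝ :=
    fun k p => 2⁻¹ * ⟪v k p, v k p⟫ - S.V (g k p) with hρ_def
  set Ψ : Fin (P.m + 1) → ℝ → ℝ :=
    fun k t => ⟪vt k (ε, t) + S.gradV (g k (ε, t)), w k (ε, t)⟫ with hΨ_def
  have hgc : ∀ k, Continuous (g k) := fun k => (hgsm k).continuous
  have hvsm : ∀ k, ContDiff ℝ (⊤ : ℕ∞) (v k) := fun k => by
    rw [hv_def]; exact FV_fderiv_apply_contDiff (hgsm k) _
  have hwsm : ∀ k, ContDiff ℝ (⊤ : ℕ∞) (w k) := fun k => by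
    rw [hw_def]; exact FV_fderiv_apply_contDiff (hgsm k) _
  have hvc : ∀ k, Continuous (v k) := fun k => (hvsm k).continuous
  have hwc : ∀ k, Continuous (w k) := fun k => (hwsm k).continuous
  have hvtc : ∀ k, Continuous (vt k) := fun k => by
    rw [hvt_def]; exact (FV_fderiv_apply_contDiff (hvsm k) _).continuous
  have hvec : ∀ k, Continuous (ve k) := fun k => by
    rw [hve_def]; exact (FV_fderiv_apply_contDiff (hvsm k) _).continuous
  have hgradc : Continuous S.gradV := FV_gradV_cont S.V_C1
  have hρc : ∀ k, Continuous (ρ k) := fun k => by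
    rw [hρ_def]
    exact (continuous_const.mul ((hvc k).inner (hvc k))).sub (S.V_C1.continuous.comp (hgc k))
  have hΨc : ∀ k, Continuous (Ψ k) := fun k => by
    rw [hΨ_def]
    apply Continuous.inner
    · exact ((hvtc k).comp (continuous_const.prodMk continuous_id)).add
        (hgradc.comp ((hgc k).comp (continuous_const.prodMk continuous_id)))
    · exact (hwc k).comp (continuous_const.prodMk continuous_id)
  -- equality of A with the local extensions
  have hAg : ∀ e ∈ Set.Ioo (-ε₀) ε₀, ∀ k : Fin (P.m + 1),
      Set.EqOn (A e) (fun t => g k (e, t)) (Set.Ioo (s (k : ℕ) e) (s ((k : ℕ) + 1) e)) := by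
    intro e he k t ht
    have hmem : ((e, t) : ℝ × ℝ) ∈ {p : ℝ × ℝ | p.1 ∈ Set.Ioo (-ε₀) ε₀ ∧
        p.2 ∈ Set.Ioo (extT P.T τ k.castSucc p.1) (extT P.T τ k.succ p.1)} := by
      refine ⟨he, ?_⟩
      rw [hcast k e, hsucc k e]
      exact ht
    exact hgeq k hmem
  have hderivA : ∀ e ∈ Set.Ioo (-ε₀) ε₀, ∀ k : Fin (P.m + 1),
      ∀ t ∈ Set.Ioo (s (k : ℕ) e) (s ((k : ℕ) + 1) e), deriv (A e) t = v k (e, t) := by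
    intro e he k t ht
    have hev : A e =ᶠ[𝓝 t] fun t' => g k (e, t') :=
      Filter.eventuallyEq_of_mem (isOpen_Ioo.mem_nhds ht) (hAg e he k)
    rw [hev.deriv_eq, hv_def]
    exact (FV_hasDerivAt_slice_t (hgsm k) e t).deriv
  have hderiv2A : ∀ k : Fin (P.m + 1),
      ∀ t ∈ Set.Ioo (s (k : ℕ) ε) (s ((k : ℕ) + 1) ε),
        deriv (deriv (A ε)) t = vt k (ε, t) := by
    intro k t ht
    have hev : deriv (A ε) =ᶠ[𝓝 t] fun t' => v k (ε, t') := by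
      apply Filter.eventuallyEq_of_mem (isOpen_Ioo.mem_nhds ht)
      intro t' ht'
      exact hderivA ε hIoo k t' ht'
    rw [hev.deriv_eq, hvt_def]
    exact (FV_hasDerivAt_slice_t (hvsm k) ε t).deriv
  have hZw : ∀ k : Fin (P.m + 1),
      ∀ t ∈ Set.Ioo (s (k : ℕ) ε) (s ((k : ℕ) + 1) ε),
        deriv (fun e => A e t) ε = w k (ε, t) := by
    intro k t ht
    have h1 : ∀ᶠ e in 𝓝 ε, e ∈ Set.Ioo (-ε₀) ε₀ :=
      Filter.eventually_of_mem (isOpen_Ioo.mem_nhds hIoo) fun _ h => h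
    have h2 : ∀ᶠ e in 𝓝 ε, s (k : ℕ) e < t :=
      ((hsd (k : ℕ)).continuousAt).eventually_lt continuousAt_const ht.1
    have h3 : ∀ᶠ e in 𝓝 ε, t < s ((k : ℕ) + 1) e :=
      continuousAt_const.eventually_lt ((hsd ((k : ℕ) + 1)).continuousAt) ht.2
    have hev : (fun e => A e t) =ᶠ[𝓝 ε] fun e => g k (e, t) := by
      filter_upwards [h1, h2, h3] with e he hlt hgt
      exact hAg e he k ⟨hlt, hgt⟩
    rw [hev.deriv_eq, hw_def]
    exact (FV_hasDerivAt_slice_e (hgsm k) ε t).deriv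
  -- the action as a sum of smooth piece integrals
  have hact : ∀ e ∈ Set.Ioo (-ε₀) ε₀, action S P.T (A e) =
      ∑ k : Fin (P.m + 1), ∫ t in s (k : ℕ) e..s ((k : ℕ) + 1) e, ρ k (e, t) := by
    intro e he
    have hpiece : ∀ k : Fin (P.m + 1),
        IntervalIntegrable (fun t => (2⁻¹ : ℝ) * ‖deriv (A e) t‖ ^ 2 - S.V (A e t))
          MeasureTheory.volume (s (k : ℕ) e) (s ((k : ℕ) + 1) e) ∧
        (∫ t in s (k : ℕ) e..s ((k : ℕ) + 1) e,
            ((2⁻¹ : ℝ) * ‖deriv (A e) t‖ ^ 2 - S.V (A e t)))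
          = ∫ t in s (k : ℕ) e..s ((k : ℕ) + 1) e, ρ k (e, t) := by
      intro k
      apply FV_piece (hslt e he (k : ℕ) (Nat.lt_succ_iff.mp k.isLt)).le
        ((hρc k).comp (continuous_const.prodMk continuous_id))
      intro t ht
      show (2⁻¹ : ℝ) * ‖deriv (A e) t‖ ^ 2 - S.V (A e t) = ρ k (e, t)
      rw [hderivA e he k t ht, hAg e he k ht]
      simp only [hρ_def]
      rw [real_inner_self_eq_norm_sq]
    have hsplit := intervalIntegral.sum_integral_adjacent_intervals (a := fun k => s k e)
      (n := P.m + 1) fun k hk => (hpiece ⟨k, hk⟩).1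
    rw [hs0, hsT] at hsplit
    unfold action
    rw [← hsplit, ← Fin.sum_univ_eq_sum_range (fun k => ∫ t in s k e..s (k + 1) e,
      ((2⁻¹ : ℝ) * ‖deriv (A e) t‖ ^ 2 - S.V (A e t))) (P.m + 1)]
    exact Finset.sum_congr rfl fun k _ => (hpiece k).2
  -- the first-variation integrand as a sum of smooth piece integrals
  have hψeq : (∫ t in (0 : ℝ)..P.T,
        ⟪deriv (deriv (A ε)) t + S.gradV (A ε t), deriv (fun e => A e t) ε⟫)
      = ∑ k : Fin (P.m + 1), ∫ t in s (k : ℕ) ε..s ((k : ℕ) + 1) ε, Ψ k t := by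
    have hpiece : ∀ k : Fin (P.m + 1),
        IntervalIntegrable (fun t =>
          (⟪deriv (deriv (A ε)) t + S.gradV (A ε t), deriv (fun e => A e t) ε⟫ : ℝ))
          MeasureTheory.volume (s (k : ℕ) ε) (s ((k : ℕ) + 1) ε) ∧
        (∫ t in s (k : ℕ) ε..s ((k : ℕ) + 1) ε,
            (⟪deriv (deriv (A ε)) t + S.gradV (A ε t), deriv (fun e => A e t) ε⟫ : ℝ))
          = ∫ t in s (k : ℕ) ε..s ((k : ℕ) + 1) ε, Ψ k t := by
      intro k
      apply FV_piece (hslt ε hIoo (k : ℕ) (Nat.lt_succ_iff.mp k.isLt)).le (hΨc k)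
      intro t ht
      show (⟪deriv (deriv (A ε)) t + S.gradV (A ε t), deriv (fun e => A e t) ε⟫ : ℝ) = Ψ k t
      rw [hderiv2A k t ht, hZw k t ht, hAg ε hIoo k ht]
    have hsplit := intervalIntegral.sum_integral_adjacent_intervals (a := fun k => s k ε)
      (n := P.m + 1) fun k hk => (hpiece ⟨k, hk⟩).1
    rw [hs0, hsT] at hsplit
    rw [← hsplit, ← Fin.sum_univ_eq_sum_range (fun k => ∫ t in s k ε..s (k + 1) ε,
      (⟪deriv (deriv (A ε)) t + S.gradV (A ε t), deriv (fun e => A e t) ε⟫ : ℝ)) (P.m + 1)]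
    exact Finset.sum_congr rfl fun k _ => (hpiece k).2
  -- boundary values of the local extensions
  have hbdry : ∀ e ∈ Set.Ioo (-ε₀) ε₀, ∀ k : Fin (P.m + 1),
      g k (e, s (k : ℕ) e) = A e (s (k : ℕ) e) ∧
      g k (e, s ((k : ℕ) + 1) e) = A e (s ((k : ℕ) + 1) e) := by
    intro e he k
    have hab := hslt e he (k : ℕ) (Nat.lt_succ_iff.mp k.isLt)
    have hsub : Set.Ioo (s (k : ℕ) e) (s ((k : ℕ) + 1) e) ⊆ Set.Icc 0 P.T := by
      intro t ht
      constructor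
      · exact le_trans (hsmem e he (k : ℕ) (by omega)).1 ht.1.le
      · exact le_trans ht.2.le (hsmem e he ((k : ℕ) + 1) (by omega)).2
    constructor
    · exact FV_val_right hab (hRP e he).cont
        ((hgc k).comp (continuous_const.prodMk continuous_id)) hsub
        (hsmem e he (k : ℕ) (by omega)) (hAg e he k)
    · exact FV_val_left hab (hRP e he).cont
        ((hgc k).comp (continuous_const.prodMk continuous_id)) hsub
        (hsmem e he ((k : ℕ) + 1) (by omega)) (hAg e he k)
  -- differentiating the matching relations at the break times
  have hjump : ∀ i : Fin P.m,
      w i.castSucc (ε, s ((i : ℕ) + 1) ε)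
          + deriv (fun e' => s ((i : ℕ) + 1) e') ε • v i.castSucc (ε, s ((i : ℕ) + 1) ε)
        = w i.succ (ε, s ((i : ℕ) + 1) ε)
          + deriv (fun e' => s ((i : ℕ) + 1) e') ε • v i.succ (ε, s ((i : ℕ) + 1) ε) := by
    intro i
    have hL : HasDerivAt (fun e => g i.castSucc (e, s ((i : ℕ) + 1) e))
        (w i.castSucc (ε, s ((i : ℕ) + 1) ε)
          + deriv (fun e' => s ((i : ℕ) + 1) e') ε • v i.castSucc (ε, s ((i : ℕ) + 1) ε)) ε := by
      rw [hw_def, hv_def]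
      exact FV_hasDerivAt_comp_moving (hgsm i.castSucc) (hsd ((i : ℕ) + 1))
    have hR : HasDerivAt (fun e => g i.succ (e, s ((i : ℕ) + 1) e))
        (w i.succ (ε, s ((i : ℕ) + 1) ε)
          + deriv (fun e' => s ((i : ℕ) + 1) e') ε • v i.succ (ε, s ((i : ℕ) + 1) ε)) ε := by
      rw [hw_def, hv_def]
      exact FV_hasDerivAt_comp_moving (hgsm i.succ) (hsd ((i : ℕ) + 1))
    have hfe : (fun e => g i.castSucc (e, s ((i : ℕ) + 1) e))
        =ᶠ[𝓝 ε] fun e => g i.succ (e, s ((i : ℕ) + 1) e) := by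
      apply Filter.eventuallyEq_of_mem (isOpen_Ioo.mem_nhds hIoo)
      intro e he
      have h1 := (hbdry e he i.castSucc).2
      have h2 := (hbdry e he i.succ).1
      simp only [Fin.coe_castSucc, Fin.val_succ] at h1 h2
      exact h1.trans h2.symm
    exact ((hR.congr_of_eventuallyEq hfe).unique hL).symm
  have hw0 : w 0 (ε, 0) = 0 := by
    have hc : HasDerivAt (fun e => g 0 (e, 0)) (w 0 (ε, 0)) ε := by
      rw [hw_def]
      exact FV_hasDerivAt_slice_e (hgsm 0) ε 0
    have hfe : (fun e => g 0 (e, 0)) =ᶠ[𝓝 ε] fun _ => P.α 0 := by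
      apply Filter.eventuallyEq_of_mem (isOpen_Ioo.mem_nhds hIoo)
      intro e he
      show g 0 (e, 0) = P.α 0
      have h1 := (hbdry e he 0).1
      simp only [Fin.val_zero] at h1
      rw [hs0] at h1
      rw [h1]
      exact (hfix e he).1
    exact hc.unique ((hasDerivAt_const ε (P.α 0)).congr_of_eventuallyEq hfe)
  have hwT : w (Fin.last P.m) (ε, P.T) = 0 := by
    have hc : HasDerivAt (fun e => g (Fin.last P.m) (e, P.T))
        (w (Fin.last P.m) (ε, P.T)) ε := by
      rw [hw_def]
      exact FV_hasDerivAt_slice_e (hgsm (Fin.last P.m)) ε P.T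
    have hfe : (fun e => g (Fin.last P.m) (e, P.T)) =ᶠ[𝓝 ε] fun _ => P.α P.T := by
      apply Filter.eventuallyEq_of_mem (isOpen_Ioo.mem_nhds hIoo)
      intro e he
      show g (Fin.last P.m) (e, P.T) = P.α P.T
      have h1 := (hbdry e he (Fin.last P.m)).2
      simp only [Fin.val_last] at h1
      rw [hsT] at h1
      rw [h1]
      exact (hfix e he).2
    exact hc.unique ((hasDerivAt_const ε (P.α P.T)).congr_of_eventuallyEq hfe)
  -- the derivative of each piece of the action
  have hΦ : ∀ k : Fin (P.m + 1),
      HasDerivAt (fun e => ∫ t in s (k : ℕ) e..s ((k : ℕ) + 1) e, ρ k (e, t))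
        ((⟪v k (ε, s ((k : ℕ) + 1) ε), w k (ε, s ((k : ℕ) + 1) ε)⟫
            - ⟪v k (ε, s (k : ℕ) ε), w k (ε, s (k : ℕ) ε)⟫
            - ∫ t in s (k : ℕ) ε..s ((k : ℕ) + 1) ε, Ψ k t)
          + ρ k (ε, s ((k : ℕ) + 1) ε) * deriv (fun e' => s ((k : ℕ) + 1) e') ε
          - ρ k (ε, s (k : ℕ) ε) * deriv (fun e' => s (k : ℕ) e') ε) ε := by
    intro k
    have hLc : Continuous ↿(fun e t => ρ k (e, t)) := hρc k
    have hρ'c : Continuous ↿(fun e t =>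
        (⟪ve k (e, t), v k (e, t)⟫ - ⟪S.gradV (g k (e, t)), w k (e, t)⟫ : ℝ)) :=
      ((hvec k).inner (hvc k)).sub ((hgradc.comp (hgc k)).inner (hwc k))
    have hρd : ∀ e t, HasDerivAt (fun x => ρ k (x, t))
        (⟪ve k (e, t), v k (e, t)⟫ - ⟪S.gradV (g k (e, t)), w k (e, t)⟫) e := by
      intro e t
      have hu : HasDerivAt (fun e' => v k (e', t)) (ve k (e, t)) e := by
        rw [hve_def]
        exact FV_hasDerivAt_slice_e (hvsm k) e t
      have hge : HasDerivAt (fun e' => g k (e', t)) (w k (e, t)) e := by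
        rw [hw_def]
        exact FV_hasDerivAt_slice_e (hgsm k) e t
      have hVd : HasDerivAt (fun e' => S.V (g k (e', t)))
          (⟪S.gradV (g k (e, t)), w k (e, t)⟫) e := by
        have hgr : HasGradientAt S.V (S.gradV (g k (e, t))) (g k (e, t)) :=
          (S.V_C1.differentiable one_ne_zero (g k (e, t))).hasGradientAt
        have h2 := hgr.hasFDerivAt.comp_hasDerivAt e hge
        exact h2
      have hinner : HasDerivAt (fun e' => (⟪v k (e', t), v k (e', t)⟫ : ℝ))
          (⟪v k (e, t), ve k (e, t)⟫ + ⟪ve k (e, t), v k (e, t)⟫) e :=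
        HasDerivAt.inner ℝ hu hu
      have hmain := (hinner.const_mul (2⁻¹ : ℝ)).sub hVd
      have harith : (2⁻¹ : ℝ) * (⟪v k (e, t), ve k (e, t)⟫ + ⟪ve k (e, t), v k (e, t)⟫)
          - ⟪S.gradV (g k (e, t)), w k (e, t)⟫
          = ⟪ve k (e, t), v k (e, t)⟫ - ⟪S.gradV (g k (e, t)), w k (e, t)⟫ := by
        rw [real_inner_comm (v k (e, t)) (ve k (e, t))]; ring
      rw [← harith, hρ_def]
      exact hmain
    have hPd := FV_hasDerivAt_param (L := fun e t => ρ k (e, t))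
      (L' := fun e t =>
        (⟪ve k (e, t), v k (e, t)⟫ - ⟪S.gradV (g k (e, t)), w k (e, t)⟫ : ℝ))
      hLc hρ'c hρd (s (k : ℕ) ε) (s ((k : ℕ) + 1) ε) ε
    have hQ1 := FV_hasDerivAt_integral_moving (L := fun e t => ρ k (e, t)) hLc
      (hsd ((k : ℕ) + 1))
    have hQ0 := FV_hasDerivAt_integral_moving (L := fun e t => ρ k (e, t)) hLc (hsd (k : ℕ))
    -- integration by parts on the fixed-endpoint part
    have hφd : ∀ t : ℝ, HasDerivAt (fun t' => (⟪v k (ε, t'), w k (ε, t')⟫ : ℝ))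
        (⟪v k (ε, t), ve k (ε, t)⟫ + ⟪vt k (ε, t), w k (ε, t)⟫) t := by
      intro t
      have h1 : HasDerivAt (fun t' => v k (ε, t')) (vt k (ε, t)) t := by
        rw [hvt_def]
        exact FV_hasDerivAt_slice_t (hvsm k) ε t
      have h2 : HasDerivAt (fun t' => w k (ε, t')) (ve k (ε, t)) t := by
        have h3 := FV_hasDerivAt_slice_t (hwsm k) ε t
        have hmx : fderiv ℝ (w k) (ε, t) (0, 1) = ve k (ε, t) := by
          rw [hve_def, hv_def, hw_def]
          exact FV_mixed_symm (hgsm k) (ε, t) (0, 1) (1, 0)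
        rwa [hmx] at h3
      exact HasDerivAt.inner ℝ h1 h2
    have hφcont : Continuous (fun t =>
        (⟪v k (ε, t), ve k (ε, t)⟫ + ⟪vt k (ε, t), w k (ε, t)⟫ : ℝ)) := by
      apply Continuous.add
      · exact ((hvc k).comp (continuous_const.prodMk continuous_id)).inner
          ((hvec k).comp (continuous_const.prodMk continuous_id))
      · exact ((hvtc k).comp (continuous_const.prodMk continuous_id)).inner
          ((hwc k).comp (continuous_const.prodMk continuous_id))
    have hFTC : (∫ t in s (k : ℕ) ε..s ((k : ℕ) + 1) ε,
          (⟪v k (ε, t), ve k (ε, t)⟫ + ⟪vt k (ε, t), w k (ε, t)⟫ : ℝ))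
        = ⟪v k (ε, s ((k : ℕ) + 1) ε), w k (ε, s ((k : ℕ) + 1) ε)⟫
          - ⟪v k (ε, s (k : ℕ) ε), w k (ε, s (k : ℕ) ε)⟫ :=
      intervalIntegral.integral_eq_sub_of_hasDerivAt (fun t _ => hφd t)
        (hφcont.intervalIntegrable _ _)
    have hsubint : (∫ t in s (k : ℕ) ε..s ((k : ℕ) + 1) ε,
          (⟪ve k (ε, t), v k (ε, t)⟫ - ⟪S.gradV (g k (ε, t)), w k (ε, t)⟫ : ℝ))
        = ⟪v k (ε, s ((k : ℕ) + 1) ε), w k (ε, s ((k : ℕ) + 1) ε)⟫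
            - ⟪v k (ε, s (k : ℕ) ε), w k (ε, s (k : ℕ) ε)⟫
            - ∫ t in s (k : ℕ) ε..s ((k : ℕ) + 1) ε, Ψ k t := by
      have heq : ∀ t : ℝ,
          (⟪ve k (ε, t), v k (ε, t)⟫ - ⟪S.gradV (g k (ε, t)), w k (ε, t)⟫ : ℝ)
          = (⟪v k (ε, t), ve k (ε, t)⟫ + ⟪vt k (ε, t), w k (ε, t)⟫) - Ψ k t := by
        intro t
        rw [hΨ_def]
        simp only [inner_add_left]
        rw [real_inner_comm (ve k (ε, t)) (v k (ε, t))]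
        ring
      rw [intervalIntegral.integral_congr (g := fun t =>
          (⟪v k (ε, t), ve k (ε, t)⟫ + ⟪vt k (ε, t), w k (ε, t)⟫ : ℝ) - Ψ k t)
        (fun t _ => heq t)]
      rw [intervalIntegral.integral_sub (hφcont.intervalIntegrable _ _)
        ((hΨc k).intervalIntegrable _ _), hFTC]
    have hintc : ∀ (e x y : ℝ),
        IntervalIntegrable (fun t => ρ k (e, t)) MeasureTheory.volume x y := fun e x y =>
      ((hρc k).comp (continuous_const.prodMk continuous_id)).intervalIntegrable x y
    have hfeq : (fun e => ∫ t in s (k : ℕ) e..s ((k : ℕ) + 1) e, ρ k (e, t))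
        = fun e => ((∫ t in s (k : ℕ) ε..s ((k : ℕ) + 1) ε, ρ k (e, t))
          + ∫ t in s ((k : ℕ) + 1) ε..s ((k : ℕ) + 1) e, ρ k (e, t))
          - ∫ t in s (k : ℕ) ε..s (k : ℕ) e, ρ k (e, t) := by
      funext e
      have h1 := intervalIntegral.integral_add_adjacent_intervals
        (hintc e (s (k : ℕ) e) (s (k : ℕ) ε)) (hintc e (s (k : ℕ) ε) (s ((k : ℕ) + 1) ε))
      have h2 := intervalIntegral.integral_add_adjacent_intervals
        (hintc e (s (k : ℕ) e) (s ((k : ℕ) + 1) ε))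
        (hintc e (s ((k : ℕ) + 1) ε) (s ((k : ℕ) + 1) e))
      have h3 := intervalIntegral.integral_symm (f := fun t => ρ k (e, t))
        (μ := MeasureTheory.volume) (s (k : ℕ) ε) (s (k : ℕ) e)
      linarith [h1, h2, h3]
    rw [hfeq, ← hsubint]
    exact (hPd.add hQ1).sub hQ0
  -- summing the pieces
  have htotal : HasDerivAt
      (fun e => ∑ k : Fin (P.m + 1), ∫ t in s (k : ℕ) e..s ((k : ℕ) + 1) e, ρ k (e, t))
      (∑ k : Fin (P.m + 1),
        ((⟪v k (ε, s ((k : ℕ) + 1) ε), w k (ε, s ((k : ℕ) + 1) ε)⟫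
            - ⟪v k (ε, s (k : ℕ) ε), w k (ε, s (k : ℕ) ε)⟫
            - ∫ t in s (k : ℕ) ε..s ((k : ℕ) + 1) ε, Ψ k t)
          + ρ k (ε, s ((k : ℕ) + 1) ε) * deriv (fun e' => s ((k : ℕ) + 1) e') ε
          - ρ k (ε, s (k : ℕ) ε) * deriv (fun e' => s (k : ℕ) e') ε)) ε :=
    HasDerivAt.fun_sum fun k _ => hΦ k
  -- identification of the one-sided limits at the break times
  have hlims : ∀ i : Fin P.m,
      llim (deriv (A ε)) (τ i ε) = v i.castSucc (ε, s ((i : ℕ) + 1) ε)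
      ∧ rlim (deriv (A ε)) (τ i ε) = v i.succ (ε, s ((i : ℕ) + 1) ε)
      ∧ llim (fun t => deriv (fun e => A e t) ε) (τ i ε) = w i.castSucc (ε, s ((i : ℕ) + 1) ε)
      ∧ rlim (fun t => deriv (fun e => A e t) ε) (τ i ε) = w i.succ (ε, s ((i : ℕ) + 1) ε) := by
    intro i
    have hb : τ i ε = s ((i : ℕ) + 1) ε := (hsmid i ε).symm
    have h1 : s (i : ℕ) ε < s ((i : ℕ) + 1) ε := hslt ε hIoo (i : ℕ) (by omega)
    have h2 : s ((i : ℕ) + 1) ε < s ((i : ℕ) + 1 + 1) ε := hslt ε hIoo ((i : ℕ) + 1) (by omega)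
    have hEl : Set.EqOn (deriv (A ε)) (fun t => v i.castSucc (ε, t))
        (Set.Ioo (s (i : ℕ) ε) (s ((i : ℕ) + 1) ε)) := fun t ht =>
      hderivA ε hIoo i.castSucc t ht
    have hEr : Set.EqOn (deriv (A ε)) (fun t => v i.succ (ε, t))
        (Set.Ioo (s ((i : ℕ) + 1) ε) (s ((i : ℕ) + 1 + 1) ε)) := fun t ht =>
      hderivA ε hIoo i.succ t ht
    have hZl : Set.EqOn (fun t => deriv (fun e => A e t) ε) (fun t => w i.castSucc (ε, t))
        (Set.Ioo (s (i : ℕ) ε) (s ((i : ℕ) + 1) ε)) := fun t ht => hZw i.castSucc t ht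
    have hZr : Set.EqOn (fun t => deriv (fun e => A e t) ε) (fun t => w i.succ (ε, t))
        (Set.Ioo (s ((i : ℕ) + 1) ε) (s ((i : ℕ) + 1 + 1) ε)) := fun t ht => hZw i.succ t ht
    refine ⟨?_, ?_, ?_, ?_⟩
    · rw [hb]
      exact FV_llim_eqOn h1 ((hvc i.castSucc).comp (continuous_const.prodMk continuous_id)) hEl
    · rw [hb]
      exact FV_rlim_eqOn h2 ((hvc i.succ).comp (continuous_const.prodMk continuous_id)) hEr
    · rw [hb]
      exact FV_llim_eqOn h1 ((hwc i.castSucc).comp (continuous_const.prodMk continuous_id)) hZl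
    · rw [hb]
      exact FV_rlim_eqOn h2 ((hwc i.succ).comp (continuous_const.prodMk continuous_id)) hZr
  -- the final computation of the sum of piece derivatives
  have hval : (∑ k : Fin (P.m + 1),
        ((⟪v k (ε, s ((k : ℕ) + 1) ε), w k (ε, s ((k : ℕ) + 1) ε)⟫
            - ⟪v k (ε, s (k : ℕ) ε), w k (ε, s (k : ℕ) ε)⟫
            - ∫ t in s (k : ℕ) ε..s ((k : ℕ) + 1) ε, Ψ k t)
          + ρ k (ε, s ((k : ℕ) + 1) ε) * deriv (fun e' => s ((k : ℕ) + 1) e') ε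
          - ρ k (ε, s (k : ℕ) ε) * deriv (fun e' => s (k : ℕ) e') ε))
      = -(∫ t in (0 : ℝ)..P.T,
            ⟪deriv (deriv (A ε)) t + S.gradV (A ε t), deriv (fun e => A e t) ε⟫)
        + ∑ i : Fin P.m,
            ⟪-(rlim (deriv (A ε)) (τ i ε) - llim (deriv (A ε)) (τ i ε)),
              (2⁻¹ : ℝ) • (rlim (fun t => deriv (fun e => A e t) ε) (τ i ε)
                + llim (fun t => deriv (fun e => A e t) ε) (τ i ε))⟫ := by
    have h1 : ∀ k ∈ (Finset.univ : Finset (Fin (P.m + 1))),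
        ((⟪v k (ε, s ((k : ℕ) + 1) ε), w k (ε, s ((k : ℕ) + 1) ε)⟫
            - ⟪v k (ε, s (k : ℕ) ε), w k (ε, s (k : ℕ) ε)⟫
            - ∫ t in s (k : ℕ) ε..s ((k : ℕ) + 1) ε, Ψ k t)
          + ρ k (ε, s ((k : ℕ) + 1) ε) * deriv (fun e' => s ((k : ℕ) + 1) e') ε
          - ρ k (ε, s (k : ℕ) ε) * deriv (fun e' => s (k : ℕ) e') ε)
        = ((⟪v k (ε, s ((k : ℕ) + 1) ε), w k (ε, s ((k : ℕ) + 1) ε)⟫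
            + ρ k (ε, s ((k : ℕ) + 1) ε) * deriv (fun e' => s ((k : ℕ) + 1) e') ε)
          - (⟪v k (ε, s (k : ℕ) ε), w k (ε, s (k : ℕ) ε)⟫
            + ρ k (ε, s (k : ℕ) ε) * deriv (fun e' => s (k : ℕ) e') ε))
          - ∫ t in s (k : ℕ) ε..s ((k : ℕ) + 1) ε, Ψ k t := fun k _ => by ring
    rw [Finset.sum_congr rfl h1, Finset.sum_sub_distrib, Finset.sum_sub_distrib, ← hψeq]
    rw [Fin.sum_univ_castSucc (f := fun k : Fin (P.m + 1) =>
      ⟪v k (ε, s ((k : ℕ) + 1) ε), w k (ε, s ((k : ℕ) + 1) ε)⟫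
        + ρ k (ε, s ((k : ℕ) + 1) ε) * deriv (fun e' => s ((k : ℕ) + 1) e') ε)]
    rw [Fin.sum_univ_succ (f := fun k : Fin (P.m + 1) =>
      ⟪v k (ε, s (k : ℕ) ε), w k (ε, s (k : ℕ) ε)⟫
        + ρ k (ε, s (k : ℕ) ε) * deriv (fun e' => s (k : ℕ) e') ε)]
    have hElast : ⟪v (Fin.last P.m) (ε, s ((Fin.last P.m : ℕ) + 1) ε),
          w (Fin.last P.m) (ε, s ((Fin.last P.m : ℕ) + 1) ε)⟫
        + ρ (Fin.last P.m) (ε, s ((Fin.last P.m : ℕ) + 1) ε)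
            * deriv (fun e' => s ((Fin.last P.m : ℕ) + 1) e') ε = 0 := by
      simp only [Fin.val_last]
      rw [hσT, hsT, hwT]
      simp
    have hF0 : ⟪v 0 (ε, s ((0 : Fin (P.m + 1)) : ℕ) ε), w 0 (ε, s ((0 : Fin (P.m + 1)) : ℕ) ε)⟫
        + ρ 0 (ε, s ((0 : Fin (P.m + 1)) : ℕ) ε)
            * deriv (fun e' => s ((0 : Fin (P.m + 1)) : ℕ) e') ε = 0 := by
      rw [show ((0 : Fin (P.m + 1)) : ℕ) = 0 from rfl, hσ0, hs0, hw0]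
      simp
    rw [hElast, hF0]
    have hterm : ∀ i : Fin P.m,
        (⟪v i.castSucc (ε, s ((i.castSucc : ℕ) + 1) ε), w i.castSucc (ε, s ((i.castSucc : ℕ) + 1) ε)⟫
          + ρ i.castSucc (ε, s ((i.castSucc : ℕ) + 1) ε)
              * deriv (fun e' => s ((i.castSucc : ℕ) + 1) e') ε)
        - (⟪v i.succ (ε, s (i.succ : ℕ) ε), w i.succ (ε, s (i.succ : ℕ) ε)⟫
          + ρ i.succ (ε, s (i.succ : ℕ) ε) * deriv (fun e' => s (i.succ : ℕ) e') ε)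
        = ⟪-(rlim (deriv (A ε)) (τ i ε) - llim (deriv (A ε)) (τ i ε)),
            (2⁻¹ : ℝ) • (rlim (fun t => deriv (fun e => A e t) ε) (τ i ε)
              + llim (fun t => deriv (fun e => A e t) ε) (τ i ε))⟫ := by
      intro i
      obtain ⟨hl1, hl2, hl3, hl4⟩ := hlims i
      rw [hl1, hl2, hl3, hl4]
      simp only [Fin.coe_castSucc, Fin.val_succ]
      have hg1 : g i.castSucc (ε, s ((i : ℕ) + 1) ε) = A ε (s ((i : ℕ) + 1) ε) := by
        have h2 := (hbdry ε hIoo i.castSucc).2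
        simpa only [Fin.coe_castSucc] using h2
      have hg2 : g i.succ (ε, s ((i : ℕ) + 1) ε) = A ε (s ((i : ℕ) + 1) ε) := by
        have h2 := (hbdry ε hIoo i.succ).1
        simpa only [Fin.val_succ] using h2
      rw [hρ_def]
      simp only []
      rw [hg1, hg2]
      exact FV_break _ _ _ _ _ _ (hjump i)
    have h3 : ∑ i : Fin P.m,
        ((⟪v i.castSucc (ε, s ((i.castSucc : ℕ) + 1) ε),
            w i.castSucc (ε, s ((i.castSucc : ℕ) + 1) ε)⟫
          + ρ i.castSucc (ε, s ((i.castSucc : ℕ) + 1) ε)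
              * deriv (fun e' => s ((i.castSucc : ℕ) + 1) e') ε)
        - (⟪v i.succ (ε, s (i.succ : ℕ) ε), w i.succ (ε, s (i.succ : ℕ) ε)⟫
          + ρ i.succ (ε, s (i.succ : ℕ) ε) * deriv (fun e' => s (i.succ : ℕ) e') ε))
        = ∑ i : Fin P.m,
            ⟪-(rlim (deriv (A ε)) (τ i ε) - llim (deriv (A ε)) (τ i ε)),
              (2⁻¹ : ℝ) • (rlim (fun t => deriv (fun e => A e t) ε) (τ i ε)
                + llim (fun t => deriv (fun e => A e t) ε) (τ i ε))⟫ :=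
      Finset.sum_congr rfl fun i _ => hterm i
    rw [Finset.sum_sub_distrib] at h3
    linarith [h3]
  rw [← hval]
  exact htotal.congr_of_eventuallyEq
    (Filter.eventuallyEq_of_mem (isOpen_Ioo.mem_nhds hIoo) fun e he => hact e he)


end
end

section
/- Let α(t,ε,δ) be a two-parameter variation of a reflected physical path α through reflected paths, with Z = ∂_εα(t,0,0), W = ∂_δα(t,0,0), and let T_i be a reflection time with time function T_i(ε,δ) and reflection point c(ε,δ) = α(T_i(ε,δ),ε,δ) ∈ Y. Then at t = T_i, ε=δ=0: ∂_δT_i·(D_tZ)̄_⊥ + (∇_ZW)̄_⊥ = ∂_δT_i·∂_εT_i·(∇V)_⊥ − ∂_εT_i·(D_tW)̄_⊥ + II(∂_δc, ∂_εT_i·α̇_⊤ + Z̄), where bars denote averages of one-sided limits at T_i and II is the second fundamental form of Y. -/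
open Filter Set Function
open scoped RealInnerProductSpace Topology

noncomputable section

section Helpers
variable {E' : Type*} [NormedAddCommGroup E'] [NormedSpace ℝ E']

lemma aux_llim_eq {f G : ℝ → E'} {t₀ a : ℝ} (ha : a < t₀)
    (hfg : ∀ t ∈ Set.Ioo a t₀, f t = G t) (hG : ContinuousAt G t₀) :
    llim f t₀ = G t₀ := by
  have hmem : Set.Ioo a t₀ ∈ 𝓝[<] t₀ := Ioo_mem_nhdsLT_of_mem ⟨ha, le_rfl⟩
  have hev : f =ᶠ[𝓝[<] t₀] G := by filter_upwards [hmem] with t ht using hfg t ht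
  have h : Tendsto f (𝓝[<] t₀) (𝓝 (G t₀)) :=
    (hG.tendsto.mono_left nhdsWithin_le_nhds).congr' hev.symm
  exact h.limUnder_eq

lemma aux_rlim_eq {f G : ℝ → E'} {t₀ b : ℝ} (hb : t₀ < b)
    (hfg : ∀ t ∈ Set.Ioo t₀ b, f t = G t) (hG : ContinuousAt G t₀) :
    rlim f t₀ = G t₀ := by
  have hmem : Set.Ioo t₀ b ∈ 𝓝[>] t₀ := Ioo_mem_nhdsGT_of_mem ⟨le_rfl, hb⟩
  have hev : f =ᶠ[𝓝[>] t₀] G := by filter_upwards [hmem] with t ht using hfg t ht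
  have h : Tendsto f (𝓝[>] t₀) (𝓝 (G t₀)) :=
    (hG.tendsto.mono_left nhdsWithin_le_nhds).congr' hev.symm
  exact h.limUnder_eq

lemma aux_left_closure_eq {f G : ℝ → E'} {t₀ a : ℝ} (ha : a < t₀)
    (hfg : ∀ t ∈ Set.Ioo a t₀, f t = G t)
    (hf : ContinuousWithinAt f (Set.Ioo a t₀) t₀) (hG : ContinuousAt G t₀) :
    f t₀ = G t₀ := by
  haveI : (𝓝[Set.Ioo a t₀] t₀).NeBot := by
    rw [← mem_closure_iff_nhdsWithin_neBot, closure_Ioo (ne_of_lt ha)]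
    exact ⟨le_of_lt ha, le_rfl⟩
  refine tendsto_nhds_unique hf.tendsto ?_
  have h : Tendsto G (𝓝[Set.Ioo a t₀] t₀) (𝓝 (G t₀)) :=
    hG.tendsto.mono_left nhdsWithin_le_nhds
  refine h.congr' ?_
  filter_upwards [self_mem_nhdsWithin] with t ht using (hfg t ht).symm

lemma aux_right_closure_eq {f G : ℝ → E'} {t₀ b : ℝ} (hb : t₀ < b)
    (hfg : ∀ t ∈ Set.Ioo t₀ b, f t = G t)
    (hf : ContinuousWithinAt f (Set.Ioo t₀ b) t₀) (hG : ContinuousAt G t₀) :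
    f t₀ = G t₀ := by
  haveI : (𝓝[Set.Ioo t₀ b] t₀).NeBot := by
    rw [← mem_closure_iff_nhdsWithin_neBot, closure_Ioo (ne_of_lt hb)]
    exact ⟨le_rfl, le_of_lt hb⟩
  refine tendsto_nhds_unique hf.tendsto ?_
  have h : Tendsto G (𝓝[Set.Ioo t₀ b] t₀) (𝓝 (G t₀)) :=
    hG.tendsto.mono_left nhdsWithin_le_nhds
  refine h.congr' ?_
  filter_upwards [self_mem_nhdsWithin] with t ht using (hfg t ht).symm

lemma aux_hasDerivAt_comp1 {f : ℝ × ℝ × ℝ → E'} {q : ℝ × ℝ × ℝ}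
    (hf : DifferentiableAt ℝ f q) :
    HasDerivAt (fun s => f (s, q.2.1, q.2.2)) (fderiv ℝ f q (1, 0, 0)) q.1 := by
  have hline : HasDerivAt (fun s : ℝ => ((s, q.2.1, q.2.2) : ℝ × ℝ × ℝ))
      ((1 : ℝ), (0 : ℝ), (0 : ℝ)) q.1 :=
    (hasDerivAt_id q.1).prodMk (hasDerivAt_const q.1 (q.2.1, q.2.2))
  have h := hf.hasFDerivAt.comp_hasDerivAt q.1 hline
  simpa [Function.comp_def] using h

lemma aux_hasDerivAt_comp2 {f : ℝ × ℝ × ℝ → E'} {q : ℝ × ℝ × ℝ}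
    (hf : DifferentiableAt ℝ f q) :
    HasDerivAt (fun s => f (q.1, s, q.2.2)) (fderiv ℝ f q (0, 1, 0)) q.2.1 := by
  have hline : HasDerivAt (fun s : ℝ => ((q.1, s, q.2.2) : ℝ × ℝ × ℝ))
      ((0 : ℝ), (1 : ℝ), (0 : ℝ)) q.2.1 :=
    (hasDerivAt_const q.2.1 q.1).prodMk ((hasDerivAt_id q.2.1).prodMk (hasDerivAt_const q.2.1 q.2.2))
  have h := hf.hasFDerivAt.comp_hasDerivAt q.2.1 hline
  simpa [Function.comp_def] using h

lemma aux_hasDerivAt_comp3 {f : ℝ × ℝ × ℝ → E'} {q : ℝ × ℝ × ℝ}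
    (hf : DifferentiableAt ℝ f q) :
    HasDerivAt (fun s => f (q.1, q.2.1, s)) (fderiv ℝ f q (0, 0, 1)) q.2.2 := by
  have hline : HasDerivAt (fun s : ℝ => ((q.1, q.2.1, s) : ℝ × ℝ × ℝ))
      ((0 : ℝ), (0 : ℝ), (1 : ℝ)) q.2.2 :=
    (hasDerivAt_const q.2.2 q.1).prodMk ((hasDerivAt_const q.2.2 q.2.1).prodMk (hasDerivAt_id q.2.2))
  have h := hf.hasFDerivAt.comp_hasDerivAt q.2.2 hline
  simpa [Function.comp_def] using h

lemma aux_hasDerivAt_comp2d1 {f : ℝ × ℝ → E'} {p : ℝ × ℝ}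
    (hf : DifferentiableAt ℝ f p) :
    HasDerivAt (fun s => f (s, p.2)) (fderiv ℝ f p (1, 0)) p.1 := by
  have hline : HasDerivAt (fun s : ℝ => ((s, p.2) : ℝ × ℝ)) ((1 : ℝ), (0 : ℝ)) p.1 :=
    (hasDerivAt_id p.1).prodMk (hasDerivAt_const p.1 p.2)
  simpa [Function.comp_def] using hf.hasFDerivAt.comp_hasDerivAt p.1 hline

lemma aux_hasDerivAt_comp2d2 {f : ℝ × ℝ → E'} {p : ℝ × ℝ}
    (hf : DifferentiableAt ℝ f p) :
    HasDerivAt (fun s => f (p.1, s)) (fderiv ℝ f p (0, 1)) p.2 := by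
  have hline : HasDerivAt (fun s : ℝ => ((p.1, s) : ℝ × ℝ)) ((0 : ℝ), (1 : ℝ)) p.2 :=
    (hasDerivAt_const p.2 p.1).prodMk (hasDerivAt_id p.2)
  simpa [Function.comp_def] using hf.hasFDerivAt.comp_hasDerivAt p.2 hline

/-- partial derivative of a map on `ℝ³` in direction `v`. -/
def pd3 (v : ℝ × ℝ × ℝ) (f : ℝ × ℝ × ℝ → E') : ℝ × ℝ × ℝ → E' :=
  fun q => fderiv ℝ f q v

lemma le1top : (1 : WithTop ℕ∞) ≤ ((⊤ : ℕ∞) : WithTop ℕ∞) := by exact_mod_cast le_top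

lemma ne0top : ((⊤ : ℕ∞) : WithTop ℕ∞) ≠ 0 := by simp

lemma letop1 : ((⊤ : ℕ∞) : WithTop ℕ∞) + 1 ≤ ((⊤ : ℕ∞) : WithTop ℕ∞) := by
  exact_mod_cast le_top

lemma le2top : (2 : WithTop ℕ∞) ≤ ((⊤ : ℕ∞) : WithTop ℕ∞) := by
  rw [show ((2 : WithTop ℕ∞)) = ((2 : ℕ∞) : WithTop ℕ∞) from rfl]
  exact_mod_cast le_top

lemma pd3_contDiff {f : ℝ × ℝ × ℝ → E'} (hf : ContDiff ℝ (⊤ : ℕ∞) f) (v : ℝ × ℝ × ℝ) :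
    ContDiff ℝ (⊤ : ℕ∞) (pd3 v f) :=
  (ContinuousLinearMap.apply ℝ E' v).contDiff.comp (hf.fderiv_right letop1)

lemma pd3_symm {f : ℝ × ℝ × ℝ → E'} (hf : ContDiff ℝ (⊤ : ℕ∞) f) (v w q : ℝ × ℝ × ℝ) :
    fderiv ℝ (pd3 v f) q w = fderiv ℝ (pd3 w f) q v := by
  have hd : ∀ x, HasFDerivAt f (fderiv ℝ f x) x :=
    fun x => (hf.differentiable ne0top x).hasFDerivAt
  have hd2 : HasFDerivAt (fderiv ℝ f) (fderiv ℝ (fderiv ℝ f) q) q :=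
    (((hf.fderiv_right letop1).differentiable ne0top) q).hasFDerivAt
  have hsymm := second_derivative_symmetric hd hd2
  have key : ∀ z : ℝ × ℝ × ℝ, fderiv ℝ (pd3 z f) q = (fderiv ℝ (fderiv ℝ f) q).flip z := by
    intro z
    have h := fderiv_clm_apply (𝕜 := ℝ) (c := fderiv ℝ f) (u := fun _ => z)
      hd2.differentiableAt (differentiableAt_const z)
    rw [show pd3 z f = fun y => fderiv ℝ f y z from rfl]
    simpa using h
  rw [key v, key w]
  simp only [ContinuousLinearMap.flip_apply]
  exact hsymm w v

lemma aux_isOpen_strip {L R : ℝ × ℝ → ℝ} {sq : Set (ℝ × ℝ)} (hsq : IsOpen sq)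
    (hL : ContinuousOn L sq) (hR : ContinuousOn R sq) :
    IsOpen {q : ℝ × ℝ × ℝ | (q.1, q.2.1) ∈ sq ∧
      L (q.1, q.2.1) < q.2.2 ∧ q.2.2 < R (q.1, q.2.1)} := by
  have hπ : Continuous (fun q : ℝ × ℝ × ℝ => (q.1, q.2.1)) :=
    continuous_fst.prodMk (continuous_fst.comp continuous_snd)
  have hs : IsOpen ((fun q : ℝ × ℝ × ℝ => (q.1, q.2.1)) ⁻¹' sq) := hsq.preimage hπ
  have hf : ContinuousOn
      (fun q : ℝ × ℝ × ℝ => (q.2.2 - L (q.1, q.2.1), R (q.1, q.2.1) - q.2.2))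
      ((fun q : ℝ × ℝ × ℝ => (q.1, q.2.1)) ⁻¹' sq) := by
    apply ContinuousOn.prodMk
    · exact (continuous_snd.comp continuous_snd).continuousOn.sub
        (hL.comp hπ.continuousOn (fun q hq => hq))
    · exact (hR.comp hπ.continuousOn (fun q hq => hq)).sub
        (continuous_snd.comp continuous_snd).continuousOn
  have h := hf.isOpen_inter_preimage (t := Set.Ioi (0:ℝ) ×ˢ Set.Ioi (0:ℝ)) hs ((isOpen_Ioi (a := (0:ℝ))).prod (isOpen_Ioi (a := (0:ℝ))))
  convert h using 1
  ext q
  simp only [Set.mem_setOf_eq, Set.mem_inter_iff, Set.mem_preimage, Set.mem_prod,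
    Set.mem_Ioi, sub_pos]

end Helpers

variable {E : Type*} [NormedAddCommGroup E] [InnerProductSpace ℝ E]
  [FiniteDimensional ℝ E]

lemma extT2_eval_zero {T : ℝ} {m : ℕ} (τ : Fin m → ℝ → ℝ → ℝ) (j : Fin (m + 2))
    (hj : (j : ℕ) = 0) (ε δ : ℝ) : extT2 T τ j ε δ = 0 := dif_pos hj

lemma extT2_eval_mid {T : ℝ} {m : ℕ} (τ : Fin m → ℝ → ℝ → ℝ) (j : Fin (m + 2))
    (hj : (j : ℕ) ≠ 0) (hj' : (j : ℕ) ≤ m) (ε δ : ℝ) :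
    extT2 T τ j ε δ = τ ⟨(j : ℕ) - 1, by omega⟩ ε δ := by
  unfold extT2; rw [dif_neg hj, dif_pos hj']

lemma extT2_eval_top {T : ℝ} {m : ℕ} (τ : Fin m → ℝ → ℝ → ℝ) (j : Fin (m + 2))
    (hj : (j : ℕ) ≠ 0) (hj' : ¬ (j : ℕ) ≤ m) (ε δ : ℝ) : extT2 T τ j ε δ = T := by
  unfold extT2; rw [dif_neg hj, dif_neg hj']

set_option maxHeartbeats 4000000 in
/-- **Relation between the averaged normal components at a reflection**
(Lemma 4.2): for a two-parameter variation of a reflected physical path, at a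
reflection time `T_i`,
`∂_δT_i (D_tZ)̄_⊥ + (∇_ZW)̄_⊥ = ∂_δT_i ∂_εT_i (∇V)_⊥ − ∂_εT_i (D_tW)̄_⊥
  + II(∂_δc, ∂_εT_i α̇_⊤ + Z̄)`. -/
theorem averaged_normal_components (S : Setting E) (P : PathData E)
    (hP : IsPhysicalPath S P) (ε₀ : ℝ) (A : ℝ → ℝ → ℝ → E)
    (τ : Fin P.m → ℝ → ℝ → ℝ) (hV : IsVariation2 S P ε₀ A τ)
    (i : Fin P.m) (hi : P.isR i = true) :
    deriv (fun δ => τ i 0 δ) 0 •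
        S.perp (P.α (P.Tt i))
          ((2⁻¹ : ℝ) •
            (rlim (deriv (fun t => deriv (fun ε => A ε 0 t) 0)) (P.Tt i) +
              llim (deriv (fun t => deriv (fun ε => A ε 0 t) 0)) (P.Tt i))) +
      S.perp (P.α (P.Tt i))
        ((2⁻¹ : ℝ) •
          (rlim (fun t => deriv (fun ε => deriv (fun δ => A ε δ t) 0) 0)
              (P.Tt i) +
            llim (fun t => deriv (fun ε => deriv (fun δ => A ε δ t) 0) 0)
              (P.Tt i))) =
    (deriv (fun δ => τ i 0 δ) 0 * deriv (fun ε => τ i ε 0) 0) •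
        S.perp (P.α (P.Tt i)) (S.gradV (P.α (P.Tt i))) -
      deriv (fun ε => τ i ε 0) 0 •
        S.perp (P.α (P.Tt i))
          ((2⁻¹ : ℝ) •
            (rlim (deriv (fun t => deriv (fun δ => A 0 δ t) 0)) (P.Tt i) +
              llim (deriv (fun t => deriv (fun δ => A 0 δ t) 0)) (P.Tt i))) +
      S.IIvec (P.α (P.Tt i)) (deriv (fun δ => A 0 δ (τ i 0 δ)) 0)
        (deriv (fun ε => τ i ε 0) 0 •
            S.tang (P.α (P.Tt i)) (llim (deriv P.α) (P.Tt i)) +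
          (2⁻¹ : ℝ) •
            (rlim (fun t => deriv (fun ε => A ε 0 t) 0) (P.Tt i) +
              llim (fun t => deriv (fun ε => A ε 0 t) 0) (P.Tt i))) := by
  classical
  obtain ⟨hRef, hPhys⟩ := hP
  have heps0 : (0 : ℝ) ∈ Set.Ioo (-ε₀) ε₀ := ⟨neg_lt_zero.mpr hV.eps_pos, hV.eps_pos⟩
  set t₀ : ℝ := P.Tt i with ht₀def
  set y : E := P.α t₀ with hydef
  set sq : Set (ℝ × ℝ) := Set.Ioo (-ε₀) ε₀ ×ˢ Set.Ioo (-ε₀) ε₀ with hsqdef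
  have hsqo : IsOpen sq := isOpen_Ioo.prod isOpen_Ioo
  have h0sq : ((0 : ℝ), (0 : ℝ)) ∈ sq := ⟨heps0, heps0⟩
  set tl : ℝ × ℝ → ℝ := fun p => τ i p.1 p.2 with htldef
  have htl : ContDiffOn ℝ (⊤ : ℕ∞) tl sq := hV.τ_smooth i
  have htl00 : tl (0, 0) = t₀ := hV.τ_base i
  have hpath : ∀ p : ℝ × ℝ, p ∈ sq →
      IsReflectedPath S ⟨P.T, P.m, fun j => τ j p.1 p.2, P.isR, A p.1 p.2⟩ :=
    fun p hp => hV.paths p.1 hp.1 p.2 hp.2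
  have ht₀mem : t₀ ∈ Set.Ioo 0 P.T := hRef.mem i
  obtain ⟨gm, hgm, hgmEq⟩ := hV.smooth2 i.castSucc
  obtain ⟨gp, hgp, hgpEq⟩ := hV.smooth2 i.succ
  -- evaluation of the middle boundary functions
  have hmidm : ∀ p : ℝ × ℝ, extT2 P.T τ (Fin.succ (Fin.castSucc i)) p.1 p.2 = tl p := by
    intro p
    rw [extT2_eval_mid τ _ (by simp) (by simp only [Fin.val_succ, Fin.coe_castSucc]; omega)]
    congr 1
  have hmidp : ∀ p : ℝ × ℝ, extT2 P.T τ (Fin.castSucc (Fin.succ i)) p.1 p.2 = tl p := by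
    intro p
    rw [extT2_eval_mid τ _ (by simp) (by simp only [Fin.coe_castSucc, Fin.val_succ]; omega)]
    congr 1
  set Lf : ℝ × ℝ → ℝ := fun p => extT2 P.T τ (Fin.castSucc (Fin.castSucc i)) p.1 p.2
    with hLdef
  set Uf : ℝ × ℝ → ℝ := fun p => extT2 P.T τ (Fin.succ (Fin.succ i)) p.1 p.2 with hUdef
  set Om : Set (ℝ × ℝ × ℝ) := {q | (q.1, q.2.1) ∈ sq ∧
      Lf (q.1, q.2.1) < q.2.2 ∧ q.2.2 < tl (q.1, q.2.1)} with hOmdef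
  set Op : Set (ℝ × ℝ × ℝ) := {q | (q.1, q.2.1) ∈ sq ∧
      tl (q.1, q.2.1) < q.2.2 ∧ q.2.2 < Uf (q.1, q.2.1)} with hOpdef
  have hAm : ∀ q ∈ Om, A q.1 q.2.1 q.2.2 = gm q := by
    intro q hq
    obtain ⟨h1, h2, h3⟩ := hq
    exact hgmEq ⟨h1.1, h1.2, h2, by rw [hmidm (q.1, q.2.1)]; exact h3⟩
  have hAp : ∀ q ∈ Op, A q.1 q.2.1 q.2.2 = gp q := by
    intro q hq
    obtain ⟨h1, h2, h3⟩ := hq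
    exact hgpEq ⟨h1.1, h1.2, by rw [hmidp (q.1, q.2.1)]; exact h2, h3⟩
  -- dichotomy for the lower boundary function
  have hLprop : ContinuousOn Lf sq ∧ (∀ p ∈ sq, 0 ≤ Lf p ∧ Lf p < tl p) ∧
      (∀ j : Fin P.m, P.Tt j ∉ Set.Ioo (Lf (0, 0)) t₀) := by
    have hval : ((Fin.castSucc (Fin.castSucc i) : Fin (P.m + 2)) : ℕ) = (i : ℕ) := by simp
    by_cases h0 : (i : ℕ) = 0
    · have hLf : ∀ p : ℝ × ℝ, Lf p = 0 :=
        fun p => extT2_eval_zero τ _ (by rw [hval]; exact h0) p.1 p.2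
      refine ⟨(continuousOn_const (c := (0:ℝ))).congr fun p _ => hLf p, ?_, ?_⟩
      · intro p hp
        rw [hLf p]
        exact ⟨le_rfl, ((hpath p hp).mem i).1⟩
      · intro j hj
        rw [hLf (0, 0)] at hj
        have hle : t₀ ≤ P.Tt j := by
          rw [ht₀def]
          exact hRef.mono.monotone (by rw [Fin.le_def]; omega)
        exact absurd hj.2 (not_lt.mpr hle)
    · have hii : (i : ℕ) - 1 < P.m := by omega
      have hLf : ∀ p : ℝ × ℝ, Lf p = τ ⟨(i : ℕ) - 1, hii⟩ p.1 p.2 := by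
        intro p
        rw [show Lf p = extT2 P.T τ (Fin.castSucc (Fin.castSucc i)) p.1 p.2 from rfl,
          extT2_eval_mid τ _ (by rw [hval]; exact h0) (by rw [hval]; omega)]
        congr 1
      refine ⟨(hV.τ_smooth ⟨(i : ℕ) - 1, hii⟩).continuousOn.congr fun p _ => hLf p, ?_, ?_⟩
      · intro p hp
        rw [hLf p]
        refine ⟨le_of_lt ((hpath p hp).mem ⟨(i : ℕ) - 1, hii⟩).1, ?_⟩
        exact (hpath p hp).mono (by rw [Fin.lt_def]; simp; omega)
      · intro j hj
        rw [hLf (0, 0), hV.τ_base ⟨(i : ℕ) - 1, hii⟩] at hj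
        rcases lt_or_ge j i with hji | hij
        · have hle : P.Tt j ≤ P.Tt ⟨(i : ℕ) - 1, hii⟩ := by
            refine hRef.mono.monotone ?_
            rw [Fin.le_def]
            have := (Fin.lt_def).mp hji
            simp
            omega
          exact absurd hj.1 (not_lt.mpr hle)
        · have hle : t₀ ≤ P.Tt j := by rw [ht₀def]; exact hRef.mono.monotone hij
          exact absurd hj.2 (not_lt.mpr hle)
  -- dichotomy for the upper boundary function
  have hUprop : ContinuousOn Uf sq ∧ (∀ p ∈ sq, tl p < Uf p ∧ Uf p ≤ P.T) ∧
      (∀ j : Fin P.m, P.Tt j ∉ Set.Ioo t₀ (Uf (0, 0))) := by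
    have hval : ((Fin.succ (Fin.succ i) : Fin (P.m + 2)) : ℕ) = (i : ℕ) + 2 := by simp
    by_cases hm2 : (i : ℕ) + 2 ≤ P.m
    · have hjj : (i : ℕ) + 1 < P.m := by omega
      have hUf : ∀ p : ℝ × ℝ, Uf p = τ ⟨(i : ℕ) + 1, hjj⟩ p.1 p.2 := by
        intro p
        rw [show Uf p = extT2 P.T τ (Fin.succ (Fin.succ i)) p.1 p.2 from rfl,
          extT2_eval_mid τ _ (by rw [hval]; omega) (by rw [hval]; omega)]
        congr 1
      refine ⟨(hV.τ_smooth ⟨(i : ℕ) + 1, hjj⟩).continuousOn.congr fun p _ => hUf p, ?_, ?_⟩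
      · intro p hp
        rw [hUf p]
        refine ⟨(hpath p hp).mono (by rw [Fin.lt_def]; simp), ?_⟩
        exact le_of_lt ((hpath p hp).mem ⟨(i : ℕ) + 1, hjj⟩).2
      · intro j hj
        rw [hUf (0, 0), hV.τ_base ⟨(i : ℕ) + 1, hjj⟩] at hj
        rcases le_or_gt j i with hij | hji
        · have hle : P.Tt j ≤ t₀ := by rw [ht₀def]; exact hRef.mono.monotone hij
          exact absurd hj.1 (not_lt.mpr hle)
        · have hle : P.Tt ⟨(i : ℕ) + 1, hjj⟩ ≤ P.Tt j := by
            refine hRef.mono.monotone ?_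
            rw [Fin.le_def]
            have := (Fin.lt_def).mp hji
            simp
            omega
          exact absurd hj.2 (not_lt.mpr hle)
    · have hUf : ∀ p : ℝ × ℝ, Uf p = P.T :=
        fun p => extT2_eval_top τ _ (by rw [hval]; omega) (by rw [hval]; omega) p.1 p.2
      refine ⟨(continuousOn_const (c := P.T)).congr fun p _ => hUf p, ?_, ?_⟩
      · intro p hp
        rw [hUf p]
        exact ⟨((hpath p hp).mem i).2, le_rfl⟩
      · intro j hj
        rw [hUf (0, 0)] at hj
        have hij : j ≤ i := by
          rw [Fin.le_def]
          have := j.isLt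
          omega
        have hle : P.Tt j ≤ t₀ := by rw [ht₀def]; exact hRef.mono.monotone hij
        exact absurd hj.1 (not_lt.mpr hle)
  obtain ⟨hLc, hLb, hLbase⟩ := hLprop
  obtain ⟨hUc, hUb, hUbase⟩ := hUprop
  have hOmo : IsOpen Om := aux_isOpen_strip hsqo hLc htl.continuousOn
  have hOpo : IsOpen Op := aux_isOpen_strip hsqo htl.continuousOn hUc
  have ha₀ : Lf (0, 0) < t₀ := by
    have := (hLb _ h0sq).2
    rwa [htl00] at this
  have hb₀ : t₀ < Uf (0, 0) := by
    have := (hUb _ h0sq).1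
    rwa [htl00] at this
  have ha₀0 : 0 ≤ Lf (0, 0) := (hLb _ h0sq).1
  have hb₀T : Uf (0, 0) ≤ P.T := (hUb _ h0sq).2
  have hmemm : ∀ t ∈ Set.Ioo (Lf (0, 0)) t₀, ((0 : ℝ), (0 : ℝ), t) ∈ Om :=
    fun t ht => ⟨h0sq, ht.1, by rw [htl00]; exact ht.2⟩
  have hmemp : ∀ t ∈ Set.Ioo t₀ (Uf (0, 0)), ((0 : ℝ), (0 : ℝ), t) ∈ Op :=
    fun t ht => ⟨h0sq, by rw [htl00]; exact ht.1, ht.2⟩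
  -- directional derivative identification on the open strips
  have hid1m : ∀ q ∈ Om, deriv (fun s => A s q.2.1 q.2.2) q.1 = fderiv ℝ gm q (1, 0, 0) := by
    intro q hq
    have hline : Continuous (fun s : ℝ => ((s, q.2.1, q.2.2) : ℝ × ℝ × ℝ)) :=
      continuous_id.prodMk continuous_const
    have hev : (fun s => A s q.2.1 q.2.2) =ᶠ[𝓝 q.1] fun s => gm (s, q.2.1, q.2.2) := by
      have hmem := hline.continuousAt.preimage_mem_nhds
        (hOmo.mem_nhds (show ((q.1, q.2.1, q.2.2) : ℝ × ℝ × ℝ) ∈ Om from hq))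
      filter_upwards [hmem] with s hs using hAm _ hs
    rw [hev.deriv_eq]
    exact (aux_hasDerivAt_comp1 (q := (q.1, q.2.1, q.2.2))
      (hgm.differentiable ne0top _)).deriv
  have hid2m : ∀ q ∈ Om, deriv (fun s => A q.1 s q.2.2) q.2.1 = fderiv ℝ gm q (0, 1, 0) := by
    intro q hq
    have hline : Continuous (fun s : ℝ => ((q.1, s, q.2.2) : ℝ × ℝ × ℝ)) :=
      continuous_const.prodMk (continuous_id.prodMk continuous_const)
    have hev : (fun s => A q.1 s q.2.2) =ᶠ[𝓝 q.2.1] fun s => gm (q.1, s, q.2.2) := by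
      have hmem := hline.continuousAt.preimage_mem_nhds
        (hOmo.mem_nhds (show ((q.1, q.2.1, q.2.2) : ℝ × ℝ × ℝ) ∈ Om from hq))
      filter_upwards [hmem] with s hs using hAm _ hs
    rw [hev.deriv_eq]
    exact (aux_hasDerivAt_comp2 (q := (q.1, q.2.1, q.2.2))
      (hgm.differentiable ne0top _)).deriv
  have hid3m : ∀ q ∈ Om, deriv (fun s => A q.1 q.2.1 s) q.2.2 = fderiv ℝ gm q (0, 0, 1) := by
    intro q hq
    have hline : Continuous (fun s : ℝ => ((q.1, q.2.1, s) : ℝ × ℝ × ℝ)) :=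
      continuous_const.prodMk (continuous_const.prodMk continuous_id)
    have hev : (fun s => A q.1 q.2.1 s) =ᶠ[𝓝 q.2.2] fun s => gm (q.1, q.2.1, s) := by
      have hmem := hline.continuousAt.preimage_mem_nhds
        (hOmo.mem_nhds (show ((q.1, q.2.1, q.2.2) : ℝ × ℝ × ℝ) ∈ Om from hq))
      filter_upwards [hmem] with s hs using hAm _ hs
    rw [hev.deriv_eq]
    exact (aux_hasDerivAt_comp3 (q := (q.1, q.2.1, q.2.2))
      (hgm.differentiable ne0top _)).deriv
  have hid1p : ∀ q ∈ Op, deriv (fun s => A s q.2.1 q.2.2) q.1 = fderiv ℝ gp q (1, 0, 0) := by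
    intro q hq
    have hline : Continuous (fun s : ℝ => ((s, q.2.1, q.2.2) : ℝ × ℝ × ℝ)) :=
      continuous_id.prodMk continuous_const
    have hev : (fun s => A s q.2.1 q.2.2) =ᶠ[𝓝 q.1] fun s => gp (s, q.2.1, q.2.2) := by
      have hmem := hline.continuousAt.preimage_mem_nhds
        (hOpo.mem_nhds (show ((q.1, q.2.1, q.2.2) : ℝ × ℝ × ℝ) ∈ Op from hq))
      filter_upwards [hmem] with s hs using hAp _ hs
    rw [hev.deriv_eq]
    exact (aux_hasDerivAt_comp1 (q := (q.1, q.2.1, q.2.2))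
      (hgp.differentiable ne0top _)).deriv
  have hid2p : ∀ q ∈ Op, deriv (fun s => A q.1 s q.2.2) q.2.1 = fderiv ℝ gp q (0, 1, 0) := by
    intro q hq
    have hline : Continuous (fun s : ℝ => ((q.1, s, q.2.2) : ℝ × ℝ × ℝ)) :=
      continuous_const.prodMk (continuous_id.prodMk continuous_const)
    have hev : (fun s => A q.1 s q.2.2) =ᶠ[𝓝 q.2.1] fun s => gp (q.1, s, q.2.2) := by
      have hmem := hline.continuousAt.preimage_mem_nhds
        (hOpo.mem_nhds (show ((q.1, q.2.1, q.2.2) : ℝ × ℝ × ℝ) ∈ Op from hq))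
      filter_upwards [hmem] with s hs using hAp _ hs
    rw [hev.deriv_eq]
    exact (aux_hasDerivAt_comp2 (q := (q.1, q.2.1, q.2.2))
      (hgp.differentiable ne0top _)).deriv
  have hid3p : ∀ q ∈ Op, deriv (fun s => A q.1 q.2.1 s) q.2.2 = fderiv ℝ gp q (0, 0, 1) := by
    intro q hq
    have hline : Continuous (fun s : ℝ => ((q.1, q.2.1, s) : ℝ × ℝ × ℝ)) :=
      continuous_const.prodMk (continuous_const.prodMk continuous_id)
    have hev : (fun s => A q.1 q.2.1 s) =ᶠ[𝓝 q.2.2] fun s => gp (q.1, q.2.1, s) := by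
      have hmem := hline.continuousAt.preimage_mem_nhds
        (hOpo.mem_nhds (show ((q.1, q.2.1, q.2.2) : ℝ × ℝ × ℝ) ∈ Op from hq))
      filter_upwards [hmem] with s hs using hAp _ hs
    rw [hev.deriv_eq]
    exact (aux_hasDerivAt_comp3 (q := (q.1, q.2.1, q.2.2))
      (hgp.differentiable ne0top _)).deriv
  have hline00 : Continuous (fun t : ℝ => (((0 : ℝ), (0 : ℝ), t) : ℝ × ℝ × ℝ)) :=
    continuous_const.prodMk (continuous_const.prodMk continuous_id)
  -- names for the one-sided data
  set q0 : ℝ × ℝ × ℝ := ((0 : ℝ), (0 : ℝ), t₀) with hq0def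
  set Zm : E := pd3 (1, 0, 0) gm q0 with hZmdef
  set Zp : E := pd3 (1, 0, 0) gp q0 with hZpdef
  set vm : E := pd3 (0, 0, 1) gm q0 with hvmdef
  set vp : E := pd3 (0, 0, 1) gp q0 with hvpdef
  set Ztm : E := fderiv ℝ (pd3 (1, 0, 0) gm) q0 (0, 0, 1) with hZtmdef
  set Ztp : E := fderiv ℝ (pd3 (1, 0, 0) gp) q0 (0, 0, 1) with hZtpdef
  set Wem : E := fderiv ℝ (pd3 (0, 1, 0) gm) q0 (1, 0, 0) with hWemdef
  set Wep : E := fderiv ℝ (pd3 (0, 1, 0) gp) q0 (1, 0, 0) with hWepdef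
  set Wtm : E := fderiv ℝ (pd3 (0, 1, 0) gm) q0 (0, 0, 1) with hWtmdef
  set Wtp : E := fderiv ℝ (pd3 (0, 1, 0) gp) q0 (0, 0, 1) with hWtpdef
  -- limit identifications
  have hZmlim : llim (fun t => deriv (fun ε => A ε 0 t) 0) t₀ = Zm := by
    refine aux_llim_eq (G := fun t => pd3 (1, 0, 0) gm (0, 0, t)) ha₀
      (fun t ht => hid1m _ (hmemm t ht)) ?_
    exact ((pd3_contDiff hgm _).continuous.comp hline00).continuousAt
  have hZplim : rlim (fun t => deriv (fun ε => A ε 0 t) 0) t₀ = Zp := by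
    refine aux_rlim_eq (G := fun t => pd3 (1, 0, 0) gp (0, 0, t)) hb₀
      (fun t ht => hid1p _ (hmemp t ht)) ?_
    exact ((pd3_contDiff hgp _).continuous.comp hline00).continuousAt
  have hvmlim : llim (deriv P.α) t₀ = vm := by
    have hPA : P.α = fun s => A 0 0 s := funext fun s => (hV.base s).symm
    refine aux_llim_eq (G := fun t => pd3 (0, 0, 1) gm (0, 0, t)) ha₀
      (fun t ht => by rw [hPA]; exact hid3m _ (hmemm t ht)) ?_
    exact ((pd3_contDiff hgm _).continuous.comp hline00).continuousAt
  have hvplim : rlim (deriv P.α) t₀ = vp := by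
    have hPA : P.α = fun s => A 0 0 s := funext fun s => (hV.base s).symm
    refine aux_rlim_eq (G := fun t => pd3 (0, 0, 1) gp (0, 0, t)) hb₀
      (fun t ht => by rw [hPA]; exact hid3p _ (hmemp t ht)) ?_
    exact ((pd3_contDiff hgp _).continuous.comp hline00).continuousAt
  have hvm' : ∀ t ∈ Set.Ioo (Lf (0, 0)) t₀, deriv P.α t = pd3 (0, 0, 1) gm (0, 0, t) := by
    intro t ht
    have hPA : P.α = fun s => A 0 0 s := funext fun s => (hV.base s).symm
    rw [hPA]
    exact hid3m _ (hmemm t ht)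
  have hvp' : ∀ t ∈ Set.Ioo t₀ (Uf (0, 0)), deriv P.α t = pd3 (0, 0, 1) gp (0, 0, t) := by
    intro t ht
    have hPA : P.α = fun s => A 0 0 s := funext fun s => (hV.base s).symm
    rw [hPA]
    exact hid3p _ (hmemp t ht)
  have hZtmlim : llim (deriv (fun t => deriv (fun ε => A ε 0 t) 0)) t₀ = Ztm := by
    refine aux_llim_eq (G := fun t => fderiv ℝ (pd3 (1, 0, 0) gm) (0, 0, t) (0, 0, 1)) ha₀
      ?_ ?_
    · intro t ht
      have hev : (fun t' => deriv (fun ε => A ε 0 t') 0) =ᶠ[𝓝 t]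
          fun t' => pd3 (1, 0, 0) gm (0, 0, t') := by
        filter_upwards [isOpen_Ioo.mem_nhds ht] with t' ht' using hid1m _ (hmemm t' ht')
      rw [hev.deriv_eq]
      exact (aux_hasDerivAt_comp3 (q := ((0 : ℝ), (0 : ℝ), t))
        ((pd3_contDiff hgm _).differentiable ne0top _)).deriv
    · exact ((pd3_contDiff (pd3_contDiff hgm (1, 0, 0)) (0, 0, 1)).continuous.comp
        hline00).continuousAt
  have hZtplim : rlim (deriv (fun t => deriv (fun ε => A ε 0 t) 0)) t₀ = Ztp := by
    refine aux_rlim_eq (G := fun t => fderiv ℝ (pd3 (1, 0, 0) gp) (0, 0, t) (0, 0, 1)) hb₀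
      ?_ ?_
    · intro t ht
      have hev : (fun t' => deriv (fun ε => A ε 0 t') 0) =ᶠ[𝓝 t]
          fun t' => pd3 (1, 0, 0) gp (0, 0, t') := by
        filter_upwards [isOpen_Ioo.mem_nhds ht] with t' ht' using hid1p _ (hmemp t' ht')
      rw [hev.deriv_eq]
      exact (aux_hasDerivAt_comp3 (q := ((0 : ℝ), (0 : ℝ), t))
        ((pd3_contDiff hgp _).differentiable ne0top _)).deriv
    · exact ((pd3_contDiff (pd3_contDiff hgp (1, 0, 0)) (0, 0, 1)).continuous.comp
        hline00).continuousAt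
  have hWemlim : llim (fun t => deriv (fun ε => deriv (fun δ => A ε δ t) 0) 0) t₀ = Wem := by
    refine aux_llim_eq (G := fun t => fderiv ℝ (pd3 (0, 1, 0) gm) (0, 0, t) (1, 0, 0)) ha₀
      ?_ ?_
    · intro t ht
      have hlinee : Continuous (fun s : ℝ => ((s, (0 : ℝ), t) : ℝ × ℝ × ℝ)) :=
        continuous_id.prodMk continuous_const
      have hev : (fun ε => deriv (fun δ => A ε δ t) 0) =ᶠ[𝓝 0]
          fun ε => pd3 (0, 1, 0) gm (ε, 0, t) := by
        filter_upwards [hlinee.continuousAt.preimage_mem_nhds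
          (hOmo.mem_nhds (hmemm t ht))] with ε hε using hid2m _ hε
      rw [hev.deriv_eq]
      exact (aux_hasDerivAt_comp1 (q := ((0 : ℝ), (0 : ℝ), t))
        ((pd3_contDiff hgm _).differentiable ne0top _)).deriv
    · exact ((pd3_contDiff (pd3_contDiff hgm (0, 1, 0)) (1, 0, 0)).continuous.comp
        hline00).continuousAt
  have hWeplim : rlim (fun t => deriv (fun ε => deriv (fun δ => A ε δ t) 0) 0) t₀ = Wep := by
    refine aux_rlim_eq (G := fun t => fderiv ℝ (pd3 (0, 1, 0) gp) (0, 0, t) (1, 0, 0)) hb₀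
      ?_ ?_
    · intro t ht
      have hlinee : Continuous (fun s : ℝ => ((s, (0 : ℝ), t) : ℝ × ℝ × ℝ)) :=
        continuous_id.prodMk continuous_const
      have hev : (fun ε => deriv (fun δ => A ε δ t) 0) =ᶠ[𝓝 0]
          fun ε => pd3 (0, 1, 0) gp (ε, 0, t) := by
        filter_upwards [hlinee.continuousAt.preimage_mem_nhds
          (hOpo.mem_nhds (hmemp t ht))] with ε hε using hid2p _ hε
      rw [hev.deriv_eq]
      exact (aux_hasDerivAt_comp1 (q := ((0 : ℝ), (0 : ℝ), t))
        ((pd3_contDiff hgp _).differentiable ne0top _)).deriv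
    · exact ((pd3_contDiff (pd3_contDiff hgp (0, 1, 0)) (1, 0, 0)).continuous.comp
        hline00).continuousAt
  have hWtmlim : llim (deriv (fun t => deriv (fun δ => A 0 δ t) 0)) t₀ = Wtm := by
    refine aux_llim_eq (G := fun t => fderiv ℝ (pd3 (0, 1, 0) gm) (0, 0, t) (0, 0, 1)) ha₀
      ?_ ?_
    · intro t ht
      have hev : (fun t' => deriv (fun δ => A 0 δ t') 0) =ᶠ[𝓝 t]
          fun t' => pd3 (0, 1, 0) gm (0, 0, t') := by
        filter_upwards [isOpen_Ioo.mem_nhds ht] with t' ht' using hid2m _ (hmemm t' ht')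
      rw [hev.deriv_eq]
      exact (aux_hasDerivAt_comp3 (q := ((0 : ℝ), (0 : ℝ), t))
        ((pd3_contDiff hgm _).differentiable ne0top _)).deriv
    · exact ((pd3_contDiff (pd3_contDiff hgm (0, 1, 0)) (0, 0, 1)).continuous.comp
        hline00).continuousAt
  have hWtplim : rlim (deriv (fun t => deriv (fun δ => A 0 δ t) 0)) t₀ = Wtp := by
    refine aux_rlim_eq (G := fun t => fderiv ℝ (pd3 (0, 1, 0) gp) (0, 0, t) (0, 0, 1)) hb₀
      ?_ ?_
    · intro t ht
      have hev : (fun t' => deriv (fun δ => A 0 δ t') 0) =ᶠ[𝓝 t]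
          fun t' => pd3 (0, 1, 0) gp (0, 0, t') := by
        filter_upwards [isOpen_Ioo.mem_nhds ht] with t' ht' using hid2p _ (hmemp t' ht')
      rw [hev.deriv_eq]
      exact (aux_hasDerivAt_comp3 (q := ((0 : ℝ), (0 : ℝ), t))
        ((pd3_contDiff hgp _).differentiable ne0top _)).deriv
    · exact ((pd3_contDiff (pd3_contDiff hgp (0, 1, 0)) (0, 0, 1)).continuous.comp
        hline00).continuousAt
  -- continuity of the gradient of V
  have hgVc : Continuous S.gradV := by
    have h1 : Continuous (fderiv ℝ S.V) := S.V_C1.continuous_fderiv one_ne_zero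
    have h2 : S.gradV = fun x => (InnerProductSpace.toDual ℝ E).symm (fderiv ℝ S.V x) := rfl
    rw [h2]
    exact (InnerProductSpace.toDual ℝ E).symm.continuous.comp h1
  -- endpoint values of the smooth extensions
  have hgmy : gm q0 = y := by
    have h := aux_left_closure_eq (f := P.α) (G := fun t => gm (0, 0, t)) ha₀
      (fun t ht => by rw [← hV.base t]; exact hAm _ (hmemm t ht))
      (((hRef.cont t₀ ⟨le_of_lt ht₀mem.1, le_of_lt ht₀mem.2⟩)).mono
        (fun t ht => ⟨le_of_lt (lt_of_le_of_lt ha₀0 ht.1), le_of_lt (lt_trans ht.2 ht₀mem.2)⟩))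
      ((hgm.continuous.comp hline00).continuousAt)
    rw [hydef]
    exact h.symm
  have hgpy : gp q0 = y := by
    have h := aux_right_closure_eq (f := P.α) (G := fun t => gp (0, 0, t)) hb₀
      (fun t ht => by rw [← hV.base t]; exact hAp _ (hmemp t ht))
      (((hRef.cont t₀ ⟨le_of_lt ht₀mem.1, le_of_lt ht₀mem.2⟩)).mono
        (fun t ht => ⟨le_of_lt (lt_trans ht₀mem.1 ht.1), le_of_lt (lt_of_lt_of_le ht.2 hb₀T)⟩))
      ((hgp.continuous.comp hline00).continuousAt)
    rw [hydef]
    exact h.symm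
  -- acceleration at the reflection point
  have haccm : fderiv ℝ (pd3 (0, 0, 1) gm) q0 (0, 0, 1) = -S.gradV y := by
    have h := aux_left_closure_eq
      (f := fun t => fderiv ℝ (pd3 (0, 0, 1) gm) (0, 0, t) (0, 0, 1))
      (G := fun t => -S.gradV (gm (0, 0, t))) ha₀ ?_ ?_ ?_
    · rw [← hgmy]; exact h
    · intro t ht
      show fderiv ℝ (pd3 (0, 0, 1) gm) (0, 0, t) (0, 0, 1) = -S.gradV (gm (0, 0, t))
      have hev : deriv P.α =ᶠ[𝓝 t] fun s => pd3 (0, 0, 1) gm (0, 0, s) := by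
        filter_upwards [isOpen_Ioo.mem_nhds ht] with s hs using hvm' s hs
      have h1 : deriv (deriv P.α) t = fderiv ℝ (pd3 (0, 0, 1) gm) (0, 0, t) (0, 0, 1) := by
        rw [hev.deriv_eq]
        exact (aux_hasDerivAt_comp3 (q := ((0 : ℝ), (0 : ℝ), t))
          ((pd3_contDiff hgm _).differentiable ne0top _)).deriv
      have hode := hPhys.ode t ⟨lt_of_le_of_lt ha₀0 ht.1, lt_trans ht.2 ht₀mem.2⟩
        (fun j h => (hLbase j) (by rw [← h]; exact ht))
      have hαt : P.α t = gm ((0 : ℝ), (0 : ℝ), t) := by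
        rw [← hV.base t]; exact hAm _ (hmemm t ht)
      rw [← h1, ← hαt]
      exact eq_neg_of_add_eq_zero_left hode
    · exact (((pd3_contDiff (pd3_contDiff hgm (0, 0, 1)) (0, 0, 1)).continuous.comp
        hline00).continuousAt).continuousWithinAt
    · exact ((hgVc.comp (hgm.continuous.comp hline00)).neg).continuousAt
  have haccp : fderiv ℝ (pd3 (0, 0, 1) gp) q0 (0, 0, 1) = -S.gradV y := by
    have h := aux_right_closure_eq
      (f := fun t => fderiv ℝ (pd3 (0, 0, 1) gp) (0, 0, t) (0, 0, 1))
      (G := fun t => -S.gradV (gp (0, 0, t))) hb₀ ?_ ?_ ?_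
    · rw [← hgpy]; exact h
    · intro t ht
      show fderiv ℝ (pd3 (0, 0, 1) gp) (0, 0, t) (0, 0, 1) = -S.gradV (gp (0, 0, t))
      have hev : deriv P.α =ᶠ[𝓝 t] fun s => pd3 (0, 0, 1) gp (0, 0, s) := by
        filter_upwards [isOpen_Ioo.mem_nhds ht] with s hs using hvp' s hs
      have h1 : deriv (deriv P.α) t = fderiv ℝ (pd3 (0, 0, 1) gp) (0, 0, t) (0, 0, 1) := by
        rw [hev.deriv_eq]
        exact (aux_hasDerivAt_comp3 (q := ((0 : ℝ), (0 : ℝ), t))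
          ((pd3_contDiff hgp _).differentiable ne0top _)).deriv
      have hode := hPhys.ode t ⟨lt_trans ht₀mem.1 ht.1, lt_of_lt_of_le ht.2 hb₀T⟩
        (fun j h => (hUbase j) (by rw [← h]; exact ht))
      have hαt : P.α t = gp ((0 : ℝ), (0 : ℝ), t) := by
        rw [← hV.base t]; exact hAp _ (hmemp t ht)
      rw [← h1, ← hαt]
      exact eq_neg_of_add_eq_zero_left hode
    · exact (((pd3_contDiff (pd3_contDiff hgp (0, 0, 1)) (0, 0, 1)).continuous.comp
        hline00).continuousAt).continuousWithinAt
    · exact ((hgVc.comp (hgp.continuous.comp hline00)).neg).continuousAt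
  -- the reflection-point curve c
  set c : ℝ × ℝ → E := fun p => A p.1 p.2 (τ i p.1 p.2) with hcdef
  have hFc : ∀ p ∈ sq, S.F (c p) = 0 := fun p hp => (hpath p hp).refl_mem i hi
  have hcgm : ∀ p ∈ sq, c p = gm (p.1, p.2, tl p) := by
    intro p hp
    have htlmem : tl p ∈ Set.Ioo 0 P.T := (hpath p hp).mem i
    exact aux_left_closure_eq (f := A p.1 p.2) (G := fun t => gm (p.1, p.2, t))
      ((hLb p hp).2)
      (fun t ht => hAm (p.1, p.2, t) ⟨hp, ht.1, ht.2⟩)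
      (((hpath p hp).cont (tl p) ⟨le_of_lt htlmem.1, le_of_lt htlmem.2⟩).mono
        (fun t ht => ⟨le_of_lt (lt_of_le_of_lt (hLb p hp).1 ht.1),
          le_of_lt (lt_trans ht.2 htlmem.2)⟩))
      ((hgm.continuous.comp (continuous_const.prodMk
        (continuous_const.prodMk continuous_id))).continuousAt)
  have hcgp : ∀ p ∈ sq, c p = gp (p.1, p.2, tl p) := by
    intro p hp
    have htlmem : tl p ∈ Set.Ioo 0 P.T := (hpath p hp).mem i
    exact aux_right_closure_eq (f := A p.1 p.2) (G := fun t => gp (p.1, p.2, t))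
      ((hUb p hp).1)
      (fun t ht => hAp (p.1, p.2, t) ⟨hp, ht.1, ht.2⟩)
      (((hpath p hp).cont (tl p) ⟨le_of_lt htlmem.1, le_of_lt htlmem.2⟩).mono
        (fun t ht => ⟨le_of_lt (lt_trans htlmem.1 ht.1),
          le_of_lt (lt_of_lt_of_le ht.2 (hUb p hp).2)⟩))
      ((hgp.continuous.comp (continuous_const.prodMk
        (continuous_const.prodMk continuous_id))).continuousAt)
  have hembd : ∀ p ∈ sq,
      DifferentiableAt ℝ (fun p' : ℝ × ℝ => ((p'.1, p'.2, tl p') : ℝ × ℝ × ℝ)) p := by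
    intro p hp
    have h3 : DifferentiableAt ℝ tl p :=
      (htl.contDiffAt (hsqo.mem_nhds hp)).differentiableAt ne0top
    exact differentiableAt_fst.prodMk (differentiableAt_snd.prodMk h3)
  have hcd : ∀ p ∈ sq, DifferentiableAt ℝ c p := by
    intro p hp
    have hcev : c =ᶠ[𝓝 p] fun p' => gm (p'.1, p'.2, tl p') := by
      filter_upwards [hsqo.mem_nhds hp] with p' hp' using hcgm p' hp'
    rw [hcev.differentiableAt_iff]
    exact ((hgm.differentiable ne0top) _).comp p (hembd p hp)
  have hsplit2 : ∀ (G : ℝ × ℝ × ℝ → E) (q : ℝ × ℝ × ℝ) (a : ℝ),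
      fderiv ℝ G q ((0 : ℝ), (1 : ℝ), a) =
        fderiv ℝ G q (0, 1, 0) + a • fderiv ℝ G q (0, 0, 1) := by
    intro G q a
    have h : ((0 : ℝ), (1 : ℝ), a) =
        ((0 : ℝ), (1 : ℝ), (0 : ℝ)) + a • ((0 : ℝ), (0 : ℝ), (1 : ℝ)) := by
      simp [Prod.ext_iff]
    rw [h, map_add, map_smul]
  have hsplit1 : ∀ (G : ℝ × ℝ × ℝ → E) (q : ℝ × ℝ × ℝ) (a : ℝ),
      fderiv ℝ G q ((1 : ℝ), (0 : ℝ), a) =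
        fderiv ℝ G q (1, 0, 0) + a • fderiv ℝ G q (0, 0, 1) := by
    intro G q a
    have h : ((1 : ℝ), (0 : ℝ), a) =
        ((1 : ℝ), (0 : ℝ), (0 : ℝ)) + a • ((0 : ℝ), (0 : ℝ), (1 : ℝ)) := by
      simp [Prod.ext_iff]
    rw [h, map_add, map_smul]
  -- the ε-partial derivative of c
  have huexprm : ∀ p ∈ sq, fderiv ℝ c p (1, 0) =
      pd3 (1, 0, 0) gm (p.1, p.2, tl p) +
        (fderiv ℝ tl p (1, 0)) • pd3 (0, 0, 1) gm (p.1, p.2, tl p) := by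
    intro p hp
    have htld : DifferentiableAt ℝ tl p :=
      (htl.contDiffAt (hsqo.mem_nhds hp)).differentiableAt ne0top
    have h1 : HasDerivAt (fun s => c (s, p.2)) (fderiv ℝ c p (1, 0)) p.1 :=
      aux_hasDerivAt_comp2d1 (hcd p hp)
    have htll : HasDerivAt (fun s => tl (s, p.2)) (fderiv ℝ tl p (1, 0)) p.1 :=
      aux_hasDerivAt_comp2d1 htld
    have hlinetr : HasDerivAt (fun s : ℝ => ((s, p.2, tl (s, p.2)) : ℝ × ℝ × ℝ))
        ((1 : ℝ), (0 : ℝ), fderiv ℝ tl p (1, 0)) p.1 :=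
      (hasDerivAt_id p.1).prodMk ((hasDerivAt_const p.1 p.2).prodMk htll)
    have h2 : HasDerivAt (fun s => gm (s, p.2, tl (s, p.2)))
        (fderiv ℝ gm (p.1, p.2, tl p) ((1 : ℝ), (0 : ℝ), fderiv ℝ tl p (1, 0))) p.1 :=
      (((hgm.differentiable ne0top) (p.1, p.2, tl p)).hasFDerivAt).comp_hasDerivAt p.1 hlinetr
    have hev : (fun s => c (s, p.2)) =ᶠ[𝓝 p.1] fun s => gm (s, p.2, tl (s, p.2)) := by
      have hlinep : Continuous (fun s : ℝ => ((s, p.2) : ℝ × ℝ)) :=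
        continuous_id.prodMk continuous_const
      filter_upwards [hlinep.continuousAt.preimage_mem_nhds (hsqo.mem_nhds hp)]
        with s hs using hcgm (s, p.2) hs
    have h3 : HasDerivAt (fun s => c (s, p.2))
        (fderiv ℝ gm (p.1, p.2, tl p) ((1 : ℝ), (0 : ℝ), fderiv ℝ tl p (1, 0))) p.1 :=
      h2.congr_of_eventuallyEq hev
    rw [h1.unique h3, hsplit1]
    rfl
  have huexprp : ∀ p ∈ sq, fderiv ℝ c p (1, 0) =
      pd3 (1, 0, 0) gp (p.1, p.2, tl p) +
        (fderiv ℝ tl p (1, 0)) • pd3 (0, 0, 1) gp (p.1, p.2, tl p) := by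
    intro p hp
    have htld : DifferentiableAt ℝ tl p :=
      (htl.contDiffAt (hsqo.mem_nhds hp)).differentiableAt ne0top
    have h1 : HasDerivAt (fun s => c (s, p.2)) (fderiv ℝ c p (1, 0)) p.1 :=
      aux_hasDerivAt_comp2d1 (hcd p hp)
    have htll : HasDerivAt (fun s => tl (s, p.2)) (fderiv ℝ tl p (1, 0)) p.1 :=
      aux_hasDerivAt_comp2d1 htld
    have hlinetr : HasDerivAt (fun s : ℝ => ((s, p.2, tl (s, p.2)) : ℝ × ℝ × ℝ))
        ((1 : ℝ), (0 : ℝ), fderiv ℝ tl p (1, 0)) p.1 :=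
      (hasDerivAt_id p.1).prodMk ((hasDerivAt_const p.1 p.2).prodMk htll)
    have h2 : HasDerivAt (fun s => gp (s, p.2, tl (s, p.2)))
        (fderiv ℝ gp (p.1, p.2, tl p) ((1 : ℝ), (0 : ℝ), fderiv ℝ tl p (1, 0))) p.1 :=
      (((hgp.differentiable ne0top) (p.1, p.2, tl p)).hasFDerivAt).comp_hasDerivAt p.1 hlinetr
    have hev : (fun s => c (s, p.2)) =ᶠ[𝓝 p.1] fun s => gp (s, p.2, tl (s, p.2)) := by
      have hlinep : Continuous (fun s : ℝ => ((s, p.2) : ℝ × ℝ)) :=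
        continuous_id.prodMk continuous_const
      filter_upwards [hlinep.continuousAt.preimage_mem_nhds (hsqo.mem_nhds hp)]
        with s hs using hcgp (s, p.2) hs
    have h3 : HasDerivAt (fun s => c (s, p.2))
        (fderiv ℝ gp (p.1, p.2, tl p) ((1 : ℝ), (0 : ℝ), fderiv ℝ tl p (1, 0))) p.1 :=
      h2.congr_of_eventuallyEq hev
    rw [h1.unique h3, hsplit1]
    rfl
  -- derivatives of the time function
  have htld00 : DifferentiableAt ℝ tl (0, 0) :=
    (htl.contDiffAt (hsqo.mem_nhds h0sq)).differentiableAt ne0top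
  have hτδeq : deriv (fun δ => τ i 0 δ) 0 = fderiv ℝ tl (0, 0) (0, 1) :=
    (aux_hasDerivAt_comp2d2 (p := ((0 : ℝ), (0 : ℝ))) htld00).deriv
  have hτεeq : deriv (fun ε => τ i ε 0) 0 = fderiv ℝ tl (0, 0) (1, 0) :=
    (aux_hasDerivAt_comp2d1 (p := ((0 : ℝ), (0 : ℝ))) htld00).deriv
  have hdcveq : deriv (fun δ => A 0 δ (τ i 0 δ)) 0 = fderiv ℝ c (0, 0) (0, 1) :=
    (aux_hasDerivAt_comp2d2 (p := ((0 : ℝ), (0 : ℝ))) (hcd _ h0sq)).deriv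
  set τδ : ℝ := fderiv ℝ tl (0, 0) (0, 1) with hτδdef
  set τε : ℝ := fderiv ℝ tl (0, 0) (1, 0) with hτεdef
  set dcv : E := fderiv ℝ c (0, 0) (0, 1) with hdcvdef
  set u0 : E := fderiv ℝ c (0, 0) (1, 0) with hu0def
  -- second derivative data of tl
  have hσsm : ContDiffOn ℝ (⊤ : ℕ∞) (fderiv ℝ tl) sq := htl.fderiv_of_isOpen hsqo letop1
  have hσd : DifferentiableAt ℝ (fun p : ℝ × ℝ => fderiv ℝ tl p (1, 0)) (0, 0) :=
    ((hσsm.contDiffAt (hsqo.mem_nhds h0sq)).differentiableAt ne0top).clm_apply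
      (differentiableAt_const _)
  set τεδ : ℝ := fderiv ℝ (fun p : ℝ × ℝ => fderiv ℝ tl p (1, 0)) (0, 0) (0, 1) with hτεδdef
  have hσδ : HasDerivAt (fun s => fderiv ℝ tl (0, s) (1, 0)) τεδ 0 :=
    aux_hasDerivAt_comp2d2 (p := ((0 : ℝ), (0 : ℝ))) hσd
  have htlδ : HasDerivAt (fun s => tl (0, s)) τδ 0 :=
    aux_hasDerivAt_comp2d2 (p := ((0 : ℝ), (0 : ℝ))) htld00
  have hembline : HasDerivAt (fun s : ℝ => (((0 : ℝ), s, tl (0, s)) : ℝ × ℝ × ℝ))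
      (((0 : ℝ), (1 : ℝ), τδ)) 0 :=
    (hasDerivAt_const 0 0).prodMk ((hasDerivAt_id 0).prodMk htlδ)
  have hq0' : (((0 : ℝ), (0 : ℝ), tl (0, 0)) : ℝ × ℝ × ℝ) = q0 := by rw [htl00]
  -- derivative of u along the δ-line, via gm
  have hMum : HasDerivAt (fun s => fderiv ℝ c (0, s) (1, 0))
      ((Wem + τδ • Ztm) + (τεδ • vm + τε • (Wtm + τδ • (-S.gradV y)))) 0 := by
    have hP1 : HasDerivAt (fun s => pd3 (1, 0, 0) gm (0, s, tl (0, s)))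
        (fderiv ℝ (pd3 (1, 0, 0) gm) q0 ((0 : ℝ), (1 : ℝ), τδ)) 0 := by
      have h := (((pd3_contDiff hgm (1, 0, 0)).differentiable ne0top
        (((0 : ℝ), (0 : ℝ), tl (0, 0)))).hasFDerivAt).comp_hasDerivAt 0 hembline
      rwa [hq0'] at h
    have hP3 : HasDerivAt (fun s => pd3 (0, 0, 1) gm (0, s, tl (0, s)))
        (fderiv ℝ (pd3 (0, 0, 1) gm) q0 ((0 : ℝ), (1 : ℝ), τδ)) 0 := by
      have h := (((pd3_contDiff hgm (0, 0, 1)).differentiable ne0top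
        (((0 : ℝ), (0 : ℝ), tl (0, 0)))).hasFDerivAt).comp_hasDerivAt 0 hembline
      rwa [hq0'] at h
    have hsm : HasDerivAt
        (fun s => (fderiv ℝ tl (0, s) (1, 0)) • pd3 (0, 0, 1) gm (0, s, tl (0, s)))
        (τε • fderiv ℝ (pd3 (0, 0, 1) gm) q0 ((0 : ℝ), (1 : ℝ), τδ) + τεδ • vm) 0 := by
      have h := hσδ.smul hP3
      beta_reduce at h
      rw [hq0', ← hτεdef, ← hvmdef] at h
      exact h
    have hsum := hP1.add hsm
    have hev : (fun s => fderiv ℝ c (0, s) (1, 0)) =ᶠ[𝓝 (0 : ℝ)]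
        (fun s => pd3 (1, 0, 0) gm (0, s, tl (0, s)) +
          (fderiv ℝ tl (0, s) (1, 0)) • pd3 (0, 0, 1) gm (0, s, tl (0, s))) := by
      have hlinep : Continuous (fun s : ℝ => (((0 : ℝ), s) : ℝ × ℝ)) :=
        continuous_const.prodMk continuous_id
      filter_upwards [hlinep.continuousAt.preimage_mem_nhds (hsqo.mem_nhds h0sq)]
        with s hs using huexprm (0, s) hs
    have h := hsum.congr_of_eventuallyEq hev
    have hfin : fderiv ℝ (pd3 (1, 0, 0) gm) q0 ((0 : ℝ), (1 : ℝ), τδ) +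
        (τε • fderiv ℝ (pd3 (0, 0, 1) gm) q0 ((0 : ℝ), (1 : ℝ), τδ) + τεδ • vm) =
        (Wem + τδ • Ztm) + (τεδ • vm + τε • (Wtm + τδ • (-S.gradV y))) := by
      rw [hsplit2 (pd3 (1, 0, 0) gm) q0 τδ, hsplit2 (pd3 (0, 0, 1) gm) q0 τδ,
        pd3_symm hgm (1, 0, 0) (0, 1, 0) q0, pd3_symm hgm (0, 0, 1) (0, 1, 0) q0, haccm,
        hWemdef, hZtmdef, hWtmdef]
      abel
    rwa [hfin] at h
  have hMup : HasDerivAt (fun s => fderiv ℝ c (0, s) (1, 0))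
      ((Wep + τδ • Ztp) + (τεδ • vp + τε • (Wtp + τδ • (-S.gradV y)))) 0 := by
    have hP1 : HasDerivAt (fun s => pd3 (1, 0, 0) gp (0, s, tl (0, s)))
        (fderiv ℝ (pd3 (1, 0, 0) gp) q0 ((0 : ℝ), (1 : ℝ), τδ)) 0 := by
      have h := (((pd3_contDiff hgp (1, 0, 0)).differentiable ne0top
        (((0 : ℝ), (0 : ℝ), tl (0, 0)))).hasFDerivAt).comp_hasDerivAt 0 hembline
      rwa [hq0'] at h
    have hP3 : HasDerivAt (fun s => pd3 (0, 0, 1) gp (0, s, tl (0, s)))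
        (fderiv ℝ (pd3 (0, 0, 1) gp) q0 ((0 : ℝ), (1 : ℝ), τδ)) 0 := by
      have h := (((pd3_contDiff hgp (0, 0, 1)).differentiable ne0top
        (((0 : ℝ), (0 : ℝ), tl (0, 0)))).hasFDerivAt).comp_hasDerivAt 0 hembline
      rwa [hq0'] at h
    have hsm : HasDerivAt
        (fun s => (fderiv ℝ tl (0, s) (1, 0)) • pd3 (0, 0, 1) gp (0, s, tl (0, s)))
        (τε • fderiv ℝ (pd3 (0, 0, 1) gp) q0 ((0 : ℝ), (1 : ℝ), τδ) + τεδ • vp) 0 := by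
      have h := hσδ.smul hP3
      beta_reduce at h
      rw [hq0', ← hτεdef, ← hvpdef] at h
      exact h
    have hsum := hP1.add hsm
    have hev : (fun s => fderiv ℝ c (0, s) (1, 0)) =ᶠ[𝓝 (0 : ℝ)]
        (fun s => pd3 (1, 0, 0) gp (0, s, tl (0, s)) +
          (fderiv ℝ tl (0, s) (1, 0)) • pd3 (0, 0, 1) gp (0, s, tl (0, s))) := by
      have hlinep : Continuous (fun s : ℝ => (((0 : ℝ), s) : ℝ × ℝ)) :=
        continuous_const.prodMk continuous_id
      filter_upwards [hlinep.continuousAt.preimage_mem_nhds (hsqo.mem_nhds h0sq)]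
        with s hs using huexprp (0, s) hs
    have h := hsum.congr_of_eventuallyEq hev
    have hfin : fderiv ℝ (pd3 (1, 0, 0) gp) q0 ((0 : ℝ), (1 : ℝ), τδ) +
        (τε • fderiv ℝ (pd3 (0, 0, 1) gp) q0 ((0 : ℝ), (1 : ℝ), τδ) + τεδ • vp) =
        (Wep + τδ • Ztp) + (τεδ • vp + τε • (Wtp + τδ • (-S.gradV y))) := by
      rw [hsplit2 (pd3 (1, 0, 0) gp) q0 τδ, hsplit2 (pd3 (0, 0, 1) gp) q0 τδ,
        pd3_symm hgp (1, 0, 0) (0, 1, 0) q0, pd3_symm hgp (0, 0, 1) (0, 1, 0) q0, haccp,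
        hWepdef, hZtpdef, hWtpdef]
      abel
    rwa [hfin] at h
  -- value of u at the base point
  have hu0m : u0 = Zm + τε • vm := by
    have h : fderiv ℝ c (0, 0) (1, 0) =
        pd3 (1, 0, 0) gm ((0 : ℝ), (0 : ℝ), tl (0, 0)) +
          (fderiv ℝ tl ((0 : ℝ), (0 : ℝ)) (1, 0)) •
            pd3 (0, 0, 1) gm ((0 : ℝ), (0 : ℝ), tl (0, 0)) := huexprm (0, 0) h0sq
    rw [hq0'] at h
    exact h
  have hu0p : u0 = Zp + τε • vp := by
    have h : fderiv ℝ c (0, 0) (1, 0) =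
        pd3 (1, 0, 0) gp ((0 : ℝ), (0 : ℝ), tl (0, 0)) +
          (fderiv ℝ tl ((0 : ℝ), (0 : ℝ)) (1, 0)) •
            pd3 (0, 0, 1) gp ((0 : ℝ), (0 : ℝ), tl (0, 0)) := huexprp (0, 0) h0sq
    rw [hq0'] at h
    exact h
  -- normal vector facts
  have hFy : S.F y = 0 := hRef.refl_mem i hi
  have hgFy : gradient S.F y ≠ 0 := S.nondeg y hFy
  have hgradFsm : ContDiff ℝ (⊤ : ℕ∞) (gradient S.F) := by
    have h1 := S.smoothF.fderiv_right letop1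
    exact ((InnerProductSpace.toDual ℝ E).symm.contDiff).comp h1
  have hNsm : ContDiffAt ℝ (⊤ : ℕ∞) S.N y := by
    have h1 : ContDiffAt ℝ (⊤ : ℕ∞) (fun x => ‖gradient S.F x‖) y :=
      ContDiffAt.norm ℝ hgradFsm.contDiffAt hgFy
    exact (h1.inv (norm_ne_zero_iff.mpr hgFy)).smul hgradFsm.contDiffAt
  have hNd : DifferentiableAt ℝ S.N y := hNsm.differentiableAt ne0top
  have hNnorm : ‖S.N y‖ = 1 := by
    have h : S.N y = ‖gradient S.F y‖⁻¹ • gradient S.F y := rfl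
    rw [h, norm_smul, norm_inv, norm_norm]
    exact inv_mul_cancel₀ (norm_ne_zero_iff.mpr hgFy)
  have hNne : S.N y ≠ 0 := by
    intro h
    rw [h, norm_zero] at hNnorm
    exact one_ne_zero hNnorm.symm
  have hc00 : c (0, 0) = y := by
    show A 0 0 (τ i 0 0) = y
    rw [hV.base, hV.τ_base i, hydef]
  have hcδd : HasDerivAt (fun s => c (0, s)) dcv 0 :=
    aux_hasDerivAt_comp2d2 (p := ((0 : ℝ), (0 : ℝ))) (hcd _ h0sq)
  have hNcd : HasDerivAt (fun s => S.N (c (0, s))) (fderiv ℝ S.N y dcv) 0 := by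
    have h1 : HasFDerivAt S.N (fderiv ℝ S.N y) (c (0, 0)) := by
      rw [hc00]; exact hNd.hasFDerivAt
    exact h1.comp_hasDerivAt 0 hcδd
  -- the inner product ⟪∂ε c, N(c)⟫ vanishes identically
  have hinner0 : ∀ p ∈ sq, ⟪fderiv ℝ c p (1, 0), S.N (c p)⟫ = 0 := by
    intro p hp
    have hFder : fderiv ℝ S.F (c p) (fderiv ℝ c p (1, 0)) = 0 := by
      have h1 : HasDerivAt (fun s => S.F (c (s, p.2)))
          (fderiv ℝ S.F (c p) (fderiv ℝ c p (1, 0))) p.1 := by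
        have hF := ((S.smoothF.differentiable ne0top) (c p)).hasFDerivAt
        exact hF.comp_hasDerivAt p.1 (aux_hasDerivAt_comp2d1 (hcd p hp))
      have h2 : HasDerivAt (fun s => S.F (c (s, p.2))) 0 p.1 := by
        refine (hasDerivAt_const p.1 (0 : ℝ)).congr_of_eventuallyEq ?_
        have hlinep : Continuous (fun s : ℝ => ((s, p.2) : ℝ × ℝ)) :=
          continuous_id.prodMk continuous_const
        filter_upwards [hlinep.continuousAt.preimage_mem_nhds (hsqo.mem_nhds hp)]
          with s hs using hFc (s, p.2) hs
      exact h1.unique h2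
    have hNval : S.N (c p) = ‖gradient S.F (c p)‖⁻¹ • gradient S.F (c p) := rfl
    rw [hNval, real_inner_smul_right]
    have h2 : ⟪fderiv ℝ c p (1, 0), gradient S.F (c p)⟫ = 0 := by
      rw [real_inner_comm,
        show gradient S.F (c p) =
          (InnerProductSpace.toDual ℝ E).symm (fderiv ℝ S.F (c p)) from rfl,
        InnerProductSpace.toDual_symm_apply]
      exact hFder
    rw [h2, mul_zero]
  -- differentiate the vanishing inner product in δ
  have hδzero : HasDerivAt (fun s => ⟪fderiv ℝ c (0, s) (1, 0), S.N (c (0, s))⟫)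
      (0 : ℝ) 0 := by
    refine (hasDerivAt_const 0 (0 : ℝ)).congr_of_eventuallyEq ?_
    have hlinep : Continuous (fun s : ℝ => (((0 : ℝ), s) : ℝ × ℝ)) :=
      continuous_const.prodMk continuous_id
    filter_upwards [hlinep.continuousAt.preimage_mem_nhds (hsqo.mem_nhds h0sq)]
      with s hs using hinner0 (0, s) hs
  have hE1m : ⟪u0, fderiv ℝ S.N y dcv⟫ +
      ⟪(Wem + τδ • Ztm) + (τεδ • vm + τε • (Wtm + τδ • (-S.gradV y))), S.N y⟫ = 0 := by
    have h1 := HasDerivAt.inner (𝕜 := ℝ) hMum hNcd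
    have h2 := (hδzero.unique h1).symm
    beta_reduce at h2
    rw [hc00, ← hu0def] at h2
    exact h2
  have hE1p : ⟪u0, fderiv ℝ S.N y dcv⟫ +
      ⟪(Wep + τδ • Ztp) + (τεδ • vp + τε • (Wtp + τδ • (-S.gradV y))), S.N y⟫ = 0 := by
    have h1 := HasDerivAt.inner (𝕜 := ℝ) hMup hNcd
    have h2 := (hδzero.unique h1).symm
    beta_reduce at h2
    rw [hc00, ← hu0def] at h2
    exact h2
  -- reflection conditions at the base point
  have hreflperp : S.perp y vp + S.perp y vm = 0 := by
    have h := hPhys.refl_perp i hi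
    rw [← ht₀def, ← hydef, hvplim, hvmlim] at h
    exact h
  have hrefltang : S.tang y vp = S.tang y vm := by
    have h := hPhys.refl_tang i hi
    rw [← ht₀def, ← hydef, hvplim, hvmlim] at h
    exact h
  have h2tang : vp + vm = (2 : ℝ) • S.tang y vm := by
    have e1 : vp = S.tang y vp + S.perp y vp := by simp [Setting.tang]
    have e2 : vm = S.tang y vm + S.perp y vm := by simp [Setting.tang]
    have e3 : S.perp y vp = -S.perp y vm := eq_neg_of_add_eq_zero_left hreflperp
    conv_lhs => rw [e1, e2]
    rw [hrefltang, e3]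
    module
  have hu0val : u0 = τε • S.tang y vm + (2⁻¹ : ℝ) • (Zp + Zm) := by
    have hsum : (2 : ℝ) • u0 = (Zp + Zm) + τε • (vp + vm) := by
      rw [two_smul]
      nth_rewrite 1 [hu0p]
      nth_rewrite 1 [hu0m]
      module
    rw [h2tang] at hsum
    have h4 : u0 = (2⁻¹ : ℝ) • ((2 : ℝ) • u0) := by
      rw [smul_smul]; norm_num
    rw [h4, hsum]
    module
  have hvn : ⟪vp, S.N y⟫ + ⟪vm, S.N y⟫ = 0 := by
    have h := hreflperp
    simp only [Setting.perp, ← add_smul] at h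
    rcases smul_eq_zero.mp h with h' | h'
    · exact h'
    · exact absurd h' hNne
  -- final assembly
  rw [hτδeq, hτεeq, hdcveq, hZtmlim, hZtplim, hWemlim, hWeplim, hWtmlim, hWtplim,
    hZmlim, hZplim, hvmlim, ← hu0val]
  simp only [Setting.IIvec, Setting.IIs, Setting.shape, Setting.perp]
  have hIIval : ⟪-(fderiv ℝ S.N y dcv), u0⟫ = -⟪u0, fderiv ℝ S.N y dcv⟫ := by
    rw [inner_neg_left, real_inner_comm]
  rw [hIIval]
  have hE1m' : ⟪u0, fderiv ℝ S.N y dcv⟫ + (⟪Wem, S.N y⟫ + τδ * ⟪Ztm, S.N y⟫ +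
      (τεδ * ⟪vm, S.N y⟫ + τε * (⟪Wtm, S.N y⟫ + τδ * -⟪S.gradV y, S.N y⟫))) = 0 := by
    have h := hE1m
    simp only [inner_add_left, real_inner_smul_left, inner_neg_left] at h
    linarith [h]
  have hE1p' : ⟪u0, fderiv ℝ S.N y dcv⟫ + (⟪Wep, S.N y⟫ + τδ * ⟪Ztp, S.N y⟫ +
      (τεδ * ⟪vp, S.N y⟫ + τε * (⟪Wtp, S.N y⟫ + τδ * -⟪S.gradV y, S.N y⟫))) = 0 := by
    have h := hE1p
    simp only [inner_add_left, real_inner_smul_left, inner_neg_left] at h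
    linarith [h]
  simp only [inner_add_left, real_inner_smul_left]
  match_scalars
  linear_combination (2⁻¹ : ℝ) * hE1m' + (2⁻¹ : ℝ) * hE1p' - (2⁻¹ * τεδ) * hvn

end
end
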